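/- arXiv:math/0512417 — 10 statements merged into one kernel-verified Lean document; each statement's English description precedes it below -/
import Mathlib

section
/- Let A be a norm-closed subalgebra of a C*-algebra, and suppose that (e_t) is a net in the closed unit ball of A such that for each fixed index s, e_t e_s → e_s and e_s e_t → e_s in norm as t increases. Then D = { x ∈ A : x e_t → x and e_t x → x in norm } is a norm-closed subalgebra of A containing every e_s, satisfying D A D ⊆ D, and the net (e_t) is a contractive approximate identity for D; thus D is a hereditary subalgebra of A. Conversely, every hereditary subalgebra of A arises in this way: if D is a norm-closed subalgebra of A with D A D ⊆ D and with contractive approximate identity (e_t), then the net (e_t) satisfies the above conditions and D = { x ∈ A : x e_t → x and e_t x → x in norm }. -/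
open Filter Topology

/-- `D` has a contractive (two-sided) approximate identity: a net in the closed unit
ball of `D` with `e_t * x → x` and `x * e_t → x` for every `x ∈ D`. -/
def HasCai {B : Type*} [NonUnitalNormedRing B] (D : Set B) : Prop :=
  ∃ (ι : Type) (_ : Preorder ι) (_ : IsDirected ι (· ≤ ·)) (_ : Nonempty ι) (e : ι → B),
    (∀ t, e t ∈ D) ∧ (∀ t, ‖e t‖ ≤ 1) ∧
    ∀ x ∈ D, Tendsto (fun t => e t * x) atTop (𝓝 x) ∧ Tendsto (fun t => x * e t) atTop (𝓝 x)

/-- `D` has a left contractive approximate identity. -/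
def HasLeftCai {B : Type*} [NonUnitalNormedRing B] (D : Set B) : Prop :=
  ∃ (ι : Type) (_ : Preorder ι) (_ : IsDirected ι (· ≤ ·)) (_ : Nonempty ι) (e : ι → B),
    (∀ t, e t ∈ D) ∧ (∀ t, ‖e t‖ ≤ 1) ∧
    ∀ x ∈ D, Tendsto (fun t => e t * x) atTop (𝓝 x)

/-- A norm-closed (non-unital) subalgebra, described as a subset. -/
def IsClosedSubalg {B : Type*} [NonUnitalNormedRing B] [Module ℂ B] (A : Set B) : Prop :=
  IsClosed A ∧ (0 : B) ∈ A ∧ (∀ x ∈ A, ∀ y ∈ A, x + y ∈ A) ∧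
    (∀ (c : ℂ), ∀ x ∈ A, c • x ∈ A) ∧ ∀ x ∈ A, ∀ y ∈ A, x * y ∈ A

/-- A hereditary subalgebra of `A`: a norm-closed subalgebra `D ⊆ A` with
`D A D ⊆ D` possessing a contractive approximate identity. -/
def IsHSA {B : Type*} [NonUnitalNormedRing B] [Module ℂ B] (A D : Set B) : Prop :=
  IsClosedSubalg D ∧ D ⊆ A ∧ (∀ d₁ ∈ D, ∀ a ∈ A, ∀ d₂ ∈ D, d₁ * a * d₂ ∈ D) ∧ HasCai D

/-- An r-ideal of `A`: a norm-closed right ideal of `A` possessing a left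
contractive approximate identity. -/
def IsRIdeal {B : Type*} [NonUnitalNormedRing B] [Module ℂ B] (A J : Set B) : Prop :=
  IsClosed J ∧ J ⊆ A ∧ (0 : B) ∈ J ∧ (∀ x ∈ J, ∀ y ∈ J, x + y ∈ J) ∧
    (∀ (c : ℂ), ∀ x ∈ J, c • x ∈ J) ∧ (∀ x ∈ J, ∀ a ∈ A, x * a ∈ J) ∧ HasLeftCai J

/-- `XY`: the norm-closure of the linear span of products `x * y`, `x ∈ X`, `y ∈ Y`. -/
def prodSet {B : Type*} [NonUnitalNormedRing B] [Module ℂ B] (X Y : Set B) : Set B :=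
  closure (Submodule.span ℂ {z : B | ∃ x ∈ X, ∃ y ∈ Y, z = x * y} : Set B)


lemma closedRightTendsto {B : Type*} [NonUnitalNormedRing B] {ι : Type} [Preorder ι]
    (e : ι → B) (he : ∀ t, ‖e t‖ ≤ 1) :
    IsClosed {x : B | Tendsto (fun t => x * e t) atTop (𝓝 x)} := by
  apply isClosed_of_closure_subset
  intro x hx
  rw [Set.mem_setOf_eq, Metric.tendsto_nhds]
  intro ε hε
  obtain ⟨y, hy, hxy⟩ := Metric.mem_closure_iff.mp hx (ε / 3) (by positivity)
  have hy' := Metric.tendsto_nhds.mp hy (ε / 3) (by positivity)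
  filter_upwards [hy'] with t ht
  have h1 : dist (x * e t) (y * e t) ≤ dist x y := by
    rw [dist_eq_norm, ← sub_mul, dist_eq_norm]
    calc ‖(x - y) * e t‖ ≤ ‖x - y‖ * ‖e t‖ := norm_mul_le _ _
      _ ≤ ‖x - y‖ * 1 := by
          exact mul_le_mul_of_nonneg_left (he t) (norm_nonneg _)
      _ = ‖x - y‖ := mul_one _
  calc dist (x * e t) x ≤ dist (x * e t) (y * e t) + dist (y * e t) y + dist y x :=
        dist_triangle4 _ _ _ _
    _ < ε / 3 + ε / 3 + ε / 3 :=
        add_lt_add (add_lt_add (lt_of_le_of_lt h1 hxy) ht) (by rw [dist_comm]; exact hxy)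
    _ = ε := by ring

lemma closedLeftTendsto {B : Type*} [NonUnitalNormedRing B] {ι : Type} [Preorder ι]
    (e : ι → B) (he : ∀ t, ‖e t‖ ≤ 1) :
    IsClosed {x : B | Tendsto (fun t => e t * x) atTop (𝓝 x)} := by
  apply isClosed_of_closure_subset
  intro x hx
  rw [Set.mem_setOf_eq, Metric.tendsto_nhds]
  intro ε hε
  obtain ⟨y, hy, hxy⟩ := Metric.mem_closure_iff.mp hx (ε / 3) (by positivity)
  have hy' := Metric.tendsto_nhds.mp hy (ε / 3) (by positivity)
  filter_upwards [hy'] with t ht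
  have h1 : dist (e t * x) (e t * y) ≤ dist x y := by
    rw [dist_eq_norm, ← mul_sub, dist_eq_norm]
    calc ‖e t * (x - y)‖ ≤ ‖e t‖ * ‖x - y‖ := norm_mul_le _ _
      _ ≤ 1 * ‖x - y‖ := by
          exact mul_le_mul_of_nonneg_right (he t) (norm_nonneg _)
      _ = ‖x - y‖ := one_mul _
  calc dist (e t * x) x ≤ dist (e t * x) (e t * y) + dist (e t * y) y + dist y x :=
        dist_triangle4 _ _ _ _
    _ < ε / 3 + ε / 3 + ε / 3 :=
        add_lt_add (add_lt_add (lt_of_le_of_lt h1 hxy) ht) (by rw [dist_comm]; exact hxy)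
    _ = ε := by ring

/-- If `(e_t)` is a net in the unit ball of `A` with `e_t e_s → e_s` and
`e_s e_t → e_s` for each `s`, then `D = {x ∈ A : x e_t → x, e_t x → x}` is a hereditary
subalgebra of `A` containing each `e_s`, with cai `(e_t)`; and conversely every hereditary
subalgebra of `A` arises this way from any of its contractive approximate identities. -/
theorem hsa_iff_net_characterization {B : Type*} [NonUnitalCStarAlgebra B]
    (A : Set B) (hA : IsClosedSubalg A) :
    (∀ (ι : Type) (_ : Preorder ι) (_ : IsDirected ι (· ≤ ·)) (_ : Nonempty ι) (e : ι → B),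
      (∀ t, e t ∈ A) → (∀ t, ‖e t‖ ≤ 1) →
      (∀ s, Tendsto (fun t => e t * e s) atTop (𝓝 (e s))) →
      (∀ s, Tendsto (fun t => e s * e t) atTop (𝓝 (e s))) →
      ∀ D : Set B,
        D = {x | x ∈ A ∧ Tendsto (fun t => x * e t) atTop (𝓝 x) ∧
              Tendsto (fun t => e t * x) atTop (𝓝 x)} →
        IsClosedSubalg D ∧ D ⊆ A ∧ (∀ s, e s ∈ D) ∧
          (∀ d₁ ∈ D, ∀ a ∈ A, ∀ d₂ ∈ D, d₁ * a * d₂ ∈ D) ∧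
          (∀ x ∈ D, Tendsto (fun t => e t * x) atTop (𝓝 x) ∧
            Tendsto (fun t => x * e t) atTop (𝓝 x)) ∧
          IsHSA A D) ∧
    (∀ D : Set B, IsHSA A D →
      ∀ (ι : Type) (_ : Preorder ι) (_ : IsDirected ι (· ≤ ·)) (_ : Nonempty ι) (e : ι → B),
        (∀ t, e t ∈ D) → (∀ t, ‖e t‖ ≤ 1) →
        (∀ x ∈ D, Tendsto (fun t => e t * x) atTop (𝓝 x) ∧
          Tendsto (fun t => x * e t) atTop (𝓝 x)) →
        (∀ t, e t ∈ A) ∧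
        (∀ s, Tendsto (fun t => e t * e s) atTop (𝓝 (e s))) ∧
        (∀ s, Tendsto (fun t => e s * e t) atTop (𝓝 (e s))) ∧
        D = {x | x ∈ A ∧ Tendsto (fun t => x * e t) atTop (𝓝 x) ∧
              Tendsto (fun t => e t * x) atTop (𝓝 x)}) := by
  constructor
  · intro ι _ _ _ e heA hnorm hL hR D hD
    subst hD
    have hDsub : {x | x ∈ A ∧ Tendsto (fun t => x * e t) atTop (𝓝 x) ∧
        Tendsto (fun t => e t * x) atTop (𝓝 x)} ⊆ A := fun x hx => hx.1
    have hDclosed : IsClosed {x : B | x ∈ A ∧ Tendsto (fun t => x * e t) atTop (𝓝 x) ∧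
        Tendsto (fun t => e t * x) atTop (𝓝 x)} := by
      have : {x : B | x ∈ A ∧ Tendsto (fun t => x * e t) atTop (𝓝 x) ∧
          Tendsto (fun t => e t * x) atTop (𝓝 x)} =
          A ∩ ({x : B | Tendsto (fun t => x * e t) atTop (𝓝 x)} ∩
            {x : B | Tendsto (fun t => e t * x) atTop (𝓝 x)}) := by
        ext x; simp only [Set.mem_setOf_eq, Set.mem_inter_iff]
      rw [this]
      exact hA.1.inter ((closedRightTendsto e hnorm).inter (closedLeftTendsto e hnorm))
    have hsub : IsClosedSubalg {x : B | x ∈ A ∧ Tendsto (fun t => x * e t) atTop (𝓝 x) ∧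
        Tendsto (fun t => e t * x) atTop (𝓝 x)} := by
      refine ⟨hDclosed, ⟨hA.2.1, ?_, ?_⟩, ?_, ?_, ?_⟩
      · simp only [zero_mul]; exact tendsto_const_nhds
      · simp only [mul_zero]; exact tendsto_const_nhds
      · rintro x ⟨hxA, hx1, hx2⟩ y ⟨hyA, hy1, hy2⟩
        exact ⟨hA.2.2.1 x hxA y hyA,
          by simpa [add_mul] using hx1.add hy1,
          by simpa [mul_add] using hx2.add hy2⟩
      · rintro c x ⟨hxA, hx1, hx2⟩
        exact ⟨hA.2.2.2.1 c x hxA,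
          by simpa [smul_mul_assoc] using hx1.const_smul c,
          by simpa [mul_smul_comm] using hx2.const_smul c⟩
      · rintro x ⟨hxA, hx1, hx2⟩ y ⟨hyA, hy1, hy2⟩
        exact ⟨hA.2.2.2.2 x hxA y hyA,
          by simpa [mul_assoc] using hy1.const_mul x,
          by simpa [mul_assoc] using hx2.mul_const y⟩
    have heD : ∀ s, e s ∈ {x : B | x ∈ A ∧ Tendsto (fun t => x * e t) atTop (𝓝 x) ∧
        Tendsto (fun t => e t * x) atTop (𝓝 x)} := fun s => ⟨heA s, hR s, hL s⟩
    have hDAD : ∀ d₁ ∈ {x : B | x ∈ A ∧ Tendsto (fun t => x * e t) atTop (𝓝 x) ∧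
        Tendsto (fun t => e t * x) atTop (𝓝 x)}, ∀ a ∈ A,
        ∀ d₂ ∈ {x : B | x ∈ A ∧ Tendsto (fun t => x * e t) atTop (𝓝 x) ∧
        Tendsto (fun t => e t * x) atTop (𝓝 x)},
        d₁ * a * d₂ ∈ {x : B | x ∈ A ∧ Tendsto (fun t => x * e t) atTop (𝓝 x) ∧
        Tendsto (fun t => e t * x) atTop (𝓝 x)} := by
      rintro d₁ ⟨h1A, h1r, h1l⟩ a haA d₂ ⟨h2A, h2r, h2l⟩
      refine ⟨hA.2.2.2.2 _ (hA.2.2.2.2 d₁ h1A a haA) d₂ h2A, ?_, ?_⟩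
      · simpa [mul_assoc] using h2r.const_mul (d₁ * a)
      · have := h1l.mul_const (a * d₂)
        simpa [mul_assoc] using this
    have hcai : ∀ x ∈ {x : B | x ∈ A ∧ Tendsto (fun t => x * e t) atTop (𝓝 x) ∧
        Tendsto (fun t => e t * x) atTop (𝓝 x)},
        Tendsto (fun t => e t * x) atTop (𝓝 x) ∧ Tendsto (fun t => x * e t) atTop (𝓝 x) :=
      fun x hx => ⟨hx.2.2, hx.2.1⟩
    exact ⟨hsub, hDsub, heD, hDAD, hcai,
      hsub, hDsub, hDAD, ι, inferInstance, inferInstance, inferInstance, e, heD, hnorm, hcai⟩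
  · intro D hHSA ι _ _ _ e heD hnorm hcai
    obtain ⟨hDsub, hDA, hDAD, _⟩ := hHSA
    have heA : ∀ t, e t ∈ A := fun t => hDA (heD t)
    refine ⟨heA, fun s => (hcai (e s) (heD s)).1, fun s => (hcai (e s) (heD s)).2, ?_⟩
    ext x
    constructor
    · intro hx
      exact ⟨hDA hx, (hcai x hx).2, (hcai x hx).1⟩
    · rintro ⟨hxA, hr, hl⟩
      have : (atTop : Filter ι).NeBot := atTop_neBot_iff.mpr ⟨inferInstance, inferInstance⟩
      have step : ∀ t, e t * x ∈ D := by
        intro t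
        have htend : Tendsto (fun s => e t * x * e s) atTop (𝓝 (e t * x)) := by
          simpa [mul_assoc] using hr.const_mul (e t)
        exact hDsub.1.mem_of_tendsto htend
          (Filter.Eventually.of_forall fun s => hDAD (e t) (heD t) x hxA (e s) (heD s))
      exact hDsub.1.mem_of_tendsto hl (Filter.Eventually.of_forall step)
end

section
/- Let A be a norm-closed subalgebra of a C*-algebra. Then every norm-closed subalgebra of A possessing a contractive approximate identity is contained in a hereditary subalgebra of A, i.e. in a norm-closed subalgebra D of A satisfying D A D ⊆ D and possessing a contractive approximate identity. -/
open Filter Topology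

lemma approx_lim_left {B : Type*} [NonUnitalNormedRing B] {ι : Type} [Preorder ι]
    (e : ι → B) (hen : ∀ t, ‖e t‖ ≤ 1) {M : Set B} {x : B} (hx : x ∈ closure M)
    (h : ∀ m ∈ M, Tendsto (fun t => e t * m) atTop (𝓝 m)) :
    Tendsto (fun t => e t * x) atTop (𝓝 x) := by
  rw [Metric.tendsto_nhds]
  intro ε hε
  obtain ⟨m, hm, hdm⟩ := Metric.mem_closure_iff.mp hx (ε/3) (by positivity)
  filter_upwards [Metric.tendsto_nhds.mp (h m hm) (ε/3) (by positivity)] with t ht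
  rw [dist_eq_norm] at *
  have key : e t * x - x = e t * (x - m) + (e t * m - m) + (m - x) := by noncomm_ring
  calc ‖e t * x - x‖ = ‖e t * (x - m) + (e t * m - m) + (m - x)‖ := by rw [key]
    _ ≤ ‖e t * (x - m)‖ + ‖e t * m - m‖ + ‖m - x‖ := norm_add₃_le
    _ ≤ ‖e t‖ * ‖x - m‖ + ‖e t * m - m‖ + ‖x - m‖ :=
        add_le_add (add_le_add (norm_mul_le _ _) le_rfl) (norm_sub_rev m x).le
    _ ≤ 1 * ‖x - m‖ + ‖e t * m - m‖ + ‖x - m‖ := by gcongr; exact hen t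
    _ < ε/3 + ε/3 + ε/3 := by rw [one_mul]; gcongr
    _ = ε := by ring

lemma approx_lim_right {B : Type*} [NonUnitalNormedRing B] {ι : Type} [Preorder ι]
    (e : ι → B) (hen : ∀ t, ‖e t‖ ≤ 1) {M : Set B} {x : B} (hx : x ∈ closure M)
    (h : ∀ m ∈ M, Tendsto (fun t => m * e t) atTop (𝓝 m)) :
    Tendsto (fun t => x * e t) atTop (𝓝 x) := by
  rw [Metric.tendsto_nhds]
  intro ε hε
  obtain ⟨m, hm, hdm⟩ := Metric.mem_closure_iff.mp hx (ε/3) (by positivity)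
  filter_upwards [Metric.tendsto_nhds.mp (h m hm) (ε/3) (by positivity)] with t ht
  rw [dist_eq_norm] at *
  have key : x * e t - x = (x - m) * e t + (m * e t - m) + (m - x) := by noncomm_ring
  calc ‖x * e t - x‖ = ‖(x - m) * e t + (m * e t - m) + (m - x)‖ := by rw [key]
    _ ≤ ‖(x - m) * e t‖ + ‖m * e t - m‖ + ‖m - x‖ := norm_add₃_le
    _ ≤ ‖x - m‖ * ‖e t‖ + ‖m * e t - m‖ + ‖x - m‖ :=
        add_le_add (add_le_add (norm_mul_le _ _) le_rfl) (norm_sub_rev m x).le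
    _ ≤ ‖x - m‖ * 1 + ‖m * e t - m‖ + ‖x - m‖ := by gcongr; exact hen t
    _ < ε/3 + ε/3 + ε/3 := by rw [mul_one]; gcongr
    _ = ε := by ring
/-- Every norm-closed subalgebra of `A` possessing a contractive
approximate identity is contained in a hereditary subalgebra of `A`. -/
theorem approx_unital_subalg_subset_hsa {B : Type*} [NonUnitalCStarAlgebra B]
    (A : Set B) (hA : IsClosedSubalg A)
    (C : Set B) (hC : IsClosedSubalg C) (hCA : C ⊆ A) (hcai : HasCai C) :
    ∃ D : Set B, IsHSA A D ∧ C ⊆ D := by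
  obtain ⟨hAc, hA0, hAadd, hAsmul, hAmul⟩ := hA
  obtain ⟨ι, pre, dir, ne, e, heC, hen, hlim⟩ := hcai
  letI := pre; letI := dir; letI := ne
  set T : Set B := {z | ∃ x ∈ C, ∃ a ∈ A, ∃ y ∈ C, z = x * a * y} with hTdef
  set M : Submodule ℂ B := Submodule.span ℂ T with hMdef
  set D : Set B := closure (M : Set B) with hDdef
  -- T is inside A
  have hTA : T ⊆ A := by
    rintro _ ⟨x, hx, a, ha, y, hy, rfl⟩
    exact hAmul _ (hAmul _ (hCA hx) _ ha) _ (hCA hy)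
  let A' : Submodule ℂ B :=
    { carrier := A
      add_mem' := fun hx hy => hAadd _ hx _ hy
      zero_mem' := hA0
      smul_mem' := fun c x hx => hAsmul c x hx }
  have hMA : (M : Set B) ⊆ A := Submodule.span_le (p := A').mpr hTA
  -- hereditary at the level of T
  have hTmulT : ∀ x ∈ T, ∀ a ∈ A, ∀ y ∈ T, x * a * y ∈ T := by
    rintro _ ⟨c, hc, a1, ha1, c', hc', rfl⟩ b hb _ ⟨d, hd, a2, ha2, d', hd', rfl⟩
    refine ⟨c, hc, a1 * c' * b * (d * a2), ?_, d', hd', by noncomm_ring⟩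
    exact hAmul _ (hAmul _ (hAmul _ ha1 _ (hCA hc')) _ hb) _ (hAmul _ (hCA hd) _ ha2)
  -- hereditary at the level of M
  have key : ∀ a ∈ A, ∀ x ∈ (M : Set B), ∀ y ∈ (M : Set B), x * a * y ∈ M := by
    intro a ha x hx
    induction hx using Submodule.span_induction with
    | mem x hxT =>
      intro y hy
      induction hy using Submodule.span_induction with
      | mem y hyT => exact Submodule.subset_span (hTmulT _ hxT _ ha _ hyT)
      | zero => simpa using M.zero_mem
      | add y z _ _ ihy ihz =>
        have h : x * a * (y + z) = x * a * y + x * a * z := by noncomm_ring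
        rw [h]; exact M.add_mem ihy ihz
      | smul r y _ ih =>
        have h : x * a * (r • y) = r • (x * a * y) := mul_smul_comm r _ y
        rw [h]; exact M.smul_mem r ih
    | zero => intro y hy; simpa using M.zero_mem
    | add x z _ _ ihx ihz =>
      intro y hy
      have h : (x + z) * a * y = x * a * y + z * a * y := by noncomm_ring
      rw [h]; exact M.add_mem (ihx y hy) (ihz y hy)
    | smul r x _ ih =>
      intro y hy
      have h : (r • x) * a * y = r • (x * a * y) := by
        rw [smul_mul_assoc, smul_mul_assoc]
      rw [h]; exact M.smul_mem r (ih y hy)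
  -- multiplicative closure of M
  have hTT : ∀ x ∈ T, ∀ y ∈ T, x * y ∈ T := by
    rintro _ ⟨c, hc, a1, ha1, c', hc', rfl⟩ _ ⟨d, hd, a2, ha2, d', hd', rfl⟩
    refine ⟨c, hc, a1 * c' * (d * a2), ?_, d', hd', by noncomm_ring⟩
    exact hAmul _ (hAmul _ ha1 _ (hCA hc')) _ (hAmul _ (hCA hd) _ ha2)
  have hMmul : ∀ x ∈ (M : Set B), ∀ y ∈ (M : Set B), x * y ∈ M := by
    intro x hx
    induction hx using Submodule.span_induction with
    | mem x hxT =>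
      intro y hy
      induction hy using Submodule.span_induction with
      | mem y hyT => exact Submodule.subset_span (hTT _ hxT _ hyT)
      | zero => simpa using M.zero_mem
      | add y z _ _ ihy ihz => rw [mul_add]; exact M.add_mem ihy ihz
      | smul r y _ ih => rw [mul_smul_comm]; exact M.smul_mem r ih
    | zero => intro y hy; simpa using M.zero_mem
    | add x z _ _ ihx ihz =>
      intro y hy; rw [add_mul]; exact M.add_mem (ihx y hy) (ihz y hy)
    | smul r x _ ih =>
      intro y hy; rw [smul_mul_assoc]; exact M.smul_mem r (ih y hy)
  -- left and right convergence on M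
  have hMleft : ∀ m ∈ (M : Set B), Tendsto (fun t => e t * m) atTop (𝓝 m) := by
    intro m hm
    induction hm using Submodule.span_induction with
    | mem z hz =>
      obtain ⟨c, hc, a, ha, c', hc', rfl⟩ := hz
      simpa [mul_assoc] using
        (hlim c hc).1.mul (tendsto_const_nhds : Tendsto (fun _ : ι => a * c') atTop _)
    | zero => simpa using (tendsto_const_nhds : Tendsto (fun _ : ι => (0 : B)) atTop _)
    | add y z _ _ ihy ihz => simpa [mul_add] using ihy.add ihz
    | smul r y _ ih => simpa [mul_smul_comm] using ih.const_smul r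
  have hMright : ∀ m ∈ (M : Set B), Tendsto (fun t => m * e t) atTop (𝓝 m) := by
    intro m hm
    induction hm using Submodule.span_induction with
    | mem z hz =>
      obtain ⟨c, hc, a, ha, c', hc', rfl⟩ := hz
      simpa [mul_assoc] using
        (tendsto_const_nhds : Tendsto (fun _ : ι => c * a) atTop _).mul (hlim c' hc').2
    | zero => simpa using (tendsto_const_nhds : Tendsto (fun _ : ι => (0 : B)) atTop _)
    | add y z _ _ ihy ihz => simpa [add_mul] using ihy.add ihz
    | smul r y _ ih => simpa [smul_mul_assoc] using ih.const_smul r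
  -- C ⊆ D
  have hCD : C ⊆ D := by
    intro c hc
    have h1 : Tendsto (fun t => (e t * c - c) * e t) atTop (𝓝 0) := by
      have hn : Tendsto (fun t => ‖e t * c - c‖) atTop (𝓝 0) := by
        rw [← tendsto_iff_norm_sub_tendsto_zero]
        exact (hlim c hc).1
      refine squeeze_zero_norm (fun t => ?_) hn
      exact le_trans (norm_mul_le _ _)
        (mul_le_of_le_one_right (norm_nonneg _) (hen t))
    have h2 : Tendsto (fun t => c * e t - c) atTop (𝓝 0) := by
      simpa using (hlim c hc).2.sub (tendsto_const_nhds : Tendsto (fun _ : ι => c) atTop _)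
    have h3 : (fun t => e t * c * e t) =
        fun t => (e t * c - c) * e t + (c * e t - c) + c := by
      funext t; noncomm_ring
    have htend : Tendsto (fun t => e t * c * e t) atTop (𝓝 c) := by
      rw [h3]
      simpa using (h1.add h2).add (tendsto_const_nhds : Tendsto (fun _ : ι => c) atTop _)
    exact mem_closure_of_tendsto htend
      (Eventually.of_forall fun t =>
        Submodule.subset_span ⟨e t, heC t, c, hCA hc, e t, heC t, rfl⟩)
  refine ⟨D, ⟨⟨isClosed_closure, subset_closure M.zero_mem, ?_, ?_, ?_⟩,
      closure_minimal hMA hAc, ?_, ?_⟩, hCD⟩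
  · exact fun x hx y hy => map_mem_closure₂ continuous_add hx hy
      fun a ha b hb => M.add_mem ha hb
  · exact fun r x hx => map_mem_closure (continuous_const_smul r) hx
      fun a ha => M.smul_mem r ha
  · exact fun x hx y hy => map_mem_closure₂ continuous_mul hx hy hMmul
  · intro d₁ hd₁ a ha d₂ hd₂
    exact map_mem_closure₂ (f := fun x y => x * a * y) (by fun_prop) hd₁ hd₂
      fun m hm n hn => key a ha m hm n hn
  · exact ⟨ι, pre, dir, ne, e, fun t => hCD (heC t), hen,
      fun x hx => ⟨approx_lim_left e hen hx hMleft, approx_lim_right e hen hx hMright⟩⟩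
end

section
/- Let A be a norm-closed subalgebra of a C*-algebra and let D be a hereditary subalgebra of A. Set J = DA and K = AD (norm-closures of linear spans of products). Then JK = J ∩ K = D. -/
open Filter Topology

section Aux

variable {B : Type*} [NonUnitalNormedRing B]

/-- The set of `x` with `e t * x → x` is closed under topological closure, provided
the `e t` are contractions. -/
lemma cai_left_closure {ι : Type} [Preorder ι]
    (e : ι → B) (hnorm : ∀ t, ‖e t‖ ≤ 1) {S : Set B}
    (hS : ∀ x ∈ S, Tendsto (fun t => e t * x) atTop (𝓝 x)) :
    ∀ x ∈ closure S, Tendsto (fun t => e t * x) atTop (𝓝 x) := by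
  intro x hx
  rw [Metric.tendsto_nhds]
  intro ε hε
  obtain ⟨y, hyS, hxy⟩ := Metric.mem_closure_iff.mp hx (ε / 3) (by linarith)
  have h1 := (Metric.tendsto_nhds.mp (hS y hyS)) (ε / 3) (by linarith)
  filter_upwards [h1] with t ht
  have htri : dist (e t * x) x ≤ dist (e t * x) (e t * y) + dist (e t * y) y + dist y x :=
    dist_triangle4 _ _ _ _
  have h2 : dist (e t * x) (e t * y) ≤ dist x y := by
    rw [dist_eq_norm, dist_eq_norm, ← mul_sub]
    calc ‖e t * (x - y)‖ ≤ ‖e t‖ * ‖x - y‖ := norm_mul_le _ _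
      _ ≤ 1 * ‖x - y‖ := mul_le_mul_of_nonneg_right (hnorm t) (norm_nonneg _)
      _ = ‖x - y‖ := one_mul _
  have h3 : dist y x = dist x y := dist_comm y x
  linarith

lemma cai_right_closure {ι : Type} [Preorder ι]
    (e : ι → B) (hnorm : ∀ t, ‖e t‖ ≤ 1) {S : Set B}
    (hS : ∀ x ∈ S, Tendsto (fun t => x * e t) atTop (𝓝 x)) :
    ∀ x ∈ closure S, Tendsto (fun t => x * e t) atTop (𝓝 x) := by
  intro x hx
  rw [Metric.tendsto_nhds]
  intro ε hε
  obtain ⟨y, hyS, hxy⟩ := Metric.mem_closure_iff.mp hx (ε / 3) (by linarith)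
  have h1 := (Metric.tendsto_nhds.mp (hS y hyS)) (ε / 3) (by linarith)
  filter_upwards [h1] with t ht
  have htri : dist (x * e t) x ≤ dist (x * e t) (y * e t) + dist (y * e t) y + dist y x :=
    dist_triangle4 _ _ _ _
  have h2 : dist (x * e t) (y * e t) ≤ dist x y := by
    rw [dist_eq_norm, dist_eq_norm, ← sub_mul]
    calc ‖(x - y) * e t‖ ≤ ‖x - y‖ * ‖e t‖ := norm_mul_le _ _
      _ ≤ ‖x - y‖ * 1 := mul_le_mul_of_nonneg_left (hnorm t) (norm_nonneg _)
      _ = ‖x - y‖ := mul_one _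
  have h3 : dist y x = dist x y := dist_comm y x
  linarith

variable [NormedSpace ℂ B] [SMulCommClass ℂ B B] [IsScalarTower ℂ B B]

omit [IsScalarTower ℂ B B] in
lemma cai_left_span {ι : Type} [Preorder ι]
    (e : ι → B) {S : Set B}
    (hS : ∀ x ∈ S, Tendsto (fun t => e t * x) atTop (𝓝 x)) :
    ∀ x ∈ (Submodule.span ℂ S : Submodule ℂ B),
      Tendsto (fun t => e t * x) atTop (𝓝 x) := by
  intro x hx
  induction hx using Submodule.span_induction with
  | mem z hz => exact hS z hz
  | zero => simpa using (tendsto_const_nhds : Tendsto (fun _ : ι => (0 : B)) atTop (𝓝 0))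
  | add u v hu hv hu' hv' => simpa only [mul_add] using hu'.add hv'
  | smul c u hu hu' => simpa only [mul_smul_comm] using hu'.const_smul c

omit [SMulCommClass ℂ B B] in
lemma cai_right_span {ι : Type} [Preorder ι]
    (e : ι → B) {S : Set B}
    (hS : ∀ x ∈ S, Tendsto (fun t => x * e t) atTop (𝓝 x)) :
    ∀ x ∈ (Submodule.span ℂ S : Submodule ℂ B),
      Tendsto (fun t => x * e t) atTop (𝓝 x) := by
  intro x hx
  induction hx using Submodule.span_induction with
  | mem z hz => exact hS z hz
  | zero => simpa using (tendsto_const_nhds : Tendsto (fun _ : ι => (0 : B)) atTop (𝓝 0))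
  | add u v hu hv hu' hv' => simpa only [add_mul] using hu'.add hv'
  | smul c u hu hu' => simpa only [smul_mul_assoc] using hu'.const_smul c

omit [SMulCommClass ℂ B B] [IsScalarTower ℂ B B] in
/-- If a closed subalgebra contains `S`, it contains the closed span of `S`. -/
lemma closed_span_subset {A : Set B} (hA : IsClosedSubalg A) {S : Set B} (hSA : S ⊆ A) :
    closure (Submodule.span ℂ S : Set B) ⊆ A := by
  obtain ⟨hclosed, h0, hadd, hsmul, -⟩ := hA
  refine closure_minimal ?_ hclosed
  intro x hx
  induction hx using Submodule.span_induction with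
  | mem z hz => exact hSA hz
  | zero => exact h0
  | add u v hu hv hu' hv' => exact hadd u hu' v hv'
  | smul c u hu hu' => exact hsmul c u hu'

end Aux

/-- If `D` is a hereditary subalgebra of `A`, `J = DA` and `K = AD`,
then `JK = J ∩ K = D`. -/
theorem hsa_eq_prod_inter {B : Type*} [NonUnitalCStarAlgebra B]
    (A : Set B) (hA : IsClosedSubalg A)
    (D : Set B) (hD : IsHSA A D)
    (J K : Set B) (hJ : J = prodSet D A) (hK : K = prodSet A D) :
    prodSet J K = J ∩ K ∧ J ∩ K = D := by
  obtain ⟨hDalg, hDA, hher, ι, instP, instDir, instNe, e, he_mem, he_norm, he_lim⟩ := hD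
  haveI : (atTop : Filter ι).NeBot := Filter.atTop_neBot_iff.mpr ⟨instNe, instDir⟩
  obtain ⟨hDclosed, hD0, hDadd, hDsmul, hDmul⟩ := hDalg
  -- the generating sets of J and K
  set SJ : Set B := {z : B | ∃ x ∈ D, ∃ y ∈ A, z = x * y} with hSJ
  set SK : Set B := {z : B | ∃ x ∈ A, ∃ y ∈ D, z = x * y} with hSK
  -- J ⊆ A, K ⊆ A
  have hJA : J ⊆ A := by
    rw [hJ]
    exact closed_span_subset hA (by
      rintro z ⟨d, hd, a, ha, rfl⟩; exact hA.2.2.2.2 d (hDA hd) a ha)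
  have hKA : K ⊆ A := by
    rw [hK]
    exact closed_span_subset hA (by
      rintro z ⟨a, ha, d, hd, rfl⟩; exact hA.2.2.2.2 a ha d (hDA hd))
  -- e t * x → x for x ∈ J
  have hJlim : ∀ x ∈ J, Tendsto (fun t => e t * x) atTop (𝓝 x) := by
    rw [hJ]
    refine cai_left_closure e he_norm (cai_left_span e ?_)
    rintro z ⟨d, hd, a, ha, rfl⟩
    have h1 : Tendsto (fun t => e t * d) atTop (𝓝 d) := (he_lim d hd).1
    have := h1.mul (tendsto_const_nhds (x := a))
    simpa only [mul_assoc] using this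
  -- x * e t → x for x ∈ K
  have hKlim : ∀ x ∈ K, Tendsto (fun t => x * e t) atTop (𝓝 x) := by
    rw [hK]
    refine cai_right_closure e he_norm (cai_right_span e ?_)
    rintro z ⟨a, ha, d, hd, rfl⟩
    have h1 : Tendsto (fun t => d * e t) atTop (𝓝 d) := (he_lim d hd).2
    have := (tendsto_const_nhds (x := a)).mul h1
    simpa only [mul_assoc] using this
  -- D ⊆ J
  have hDJ : D ⊆ J := by
    intro d hd
    rw [hJ]
    refine mem_closure_of_tendsto (he_lim d hd).2 ?_
    filter_upwards with t
    have : d * e t ∈ SJ := ⟨d, hd, e t, hDA (he_mem t), rfl⟩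
    exact Submodule.subset_span (R := ℂ) this
  -- D ⊆ K
  have hDK : D ⊆ K := by
    intro d hd
    rw [hK]
    refine mem_closure_of_tendsto (he_lim d hd).1 ?_
    filter_upwards with t
    have : e t * d ∈ SK := ⟨e t, hDA (he_mem t), d, hd, rfl⟩
    exact Submodule.subset_span (R := ℂ) this
  -- J ∩ K ⊆ D
  have hJKD : J ∩ K ⊆ D := by
    rintro x ⟨hxJ, hxK⟩
    have hmem : ∀ t, e t * x * e t ∈ D := fun t =>
      hher (e t) (he_mem t) x (hJA hxJ) (e t) (he_mem t)
    have hlim : Tendsto (fun t => e t * x * e t) atTop (𝓝 x) := by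
      rw [tendsto_iff_norm_sub_tendsto_zero]
      have hbound : ∀ t, ‖e t * x * e t - x‖ ≤ ‖e t * x - x‖ + ‖x * e t - x‖ := by
        intro t
        calc ‖e t * x * e t - x‖
            ≤ ‖e t * x * e t - x * e t‖ + ‖x * e t - x‖ := norm_sub_le_norm_sub_add_norm_sub _ _ _
          _ ≤ ‖e t * x - x‖ + ‖x * e t - x‖ := by
              gcongr
              rw [← sub_mul]
              calc ‖(e t * x - x) * e t‖ ≤ ‖e t * x - x‖ * ‖e t‖ := norm_mul_le _ _
                _ ≤ ‖e t * x - x‖ * 1 := mul_le_mul_of_nonneg_left (he_norm t) (norm_nonneg _)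
                _ = ‖e t * x - x‖ := mul_one _
      have hg : Tendsto (fun t => ‖e t * x - x‖ + ‖x * e t - x‖) atTop (𝓝 0) := by
        have h1 := tendsto_iff_norm_sub_tendsto_zero.mp (hJlim x hxJ)
        have h2 := tendsto_iff_norm_sub_tendsto_zero.mp (hKlim x hxK)
        simpa using h1.add h2
      exact squeeze_zero (fun t => norm_nonneg _) hbound hg
    exact hDclosed.closure_subset (mem_closure_of_tendsto hlim (by filter_upwards with t; exact hmem t))
  -- products of J and K land in D
  have hprod : ∀ j ∈ J, ∀ k ∈ K, j * k ∈ D := by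
    -- first at the span level
    have hspan : ∀ j ∈ (Submodule.span ℂ SJ : Submodule ℂ B),
        ∀ k ∈ (Submodule.span ℂ SK : Submodule ℂ B), j * k ∈ D := by
      intro j hj
      induction hj using Submodule.span_induction with
      | mem z hz =>
          intro k hk
          induction hk using Submodule.span_induction with
          | mem w hw =>
              obtain ⟨d, hd, a, ha, rfl⟩ := hz
              obtain ⟨a', ha', d', hd', rfl⟩ := hw
              have : d * a * (a' * d') = d * (a * a') * d' := by
                simp only [mul_assoc]
              rw [this]
              exact hher d hd (a * a') (hA.2.2.2.2 a ha a' ha') d' hd'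
          | zero => simpa using hD0
          | add u v hu hv hu' hv' => simpa only [mul_add] using hDadd _ hu' _ hv'
          | smul c u hu hu' => simpa only [mul_smul_comm] using hDsmul c _ hu'
      | zero => intro k hk; simpa using hD0
      | add u v hu hv hu' hv' =>
          intro k hk
          simpa only [add_mul] using hDadd _ (hu' k hk) _ (hv' k hk)
      | smul c u hu hu' =>
          intro k hk
          simpa only [smul_mul_assoc] using hDsmul c _ (hu' k hk)
    -- then pass to closures via sequences
    intro j hjmem k hkmem
    rw [hJ] at hjmem
    rw [hK] at hkmem
    obtain ⟨js, hjs, hjlim⟩ := mem_closure_iff_seq_limit.mp hjmem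
    obtain ⟨ks, hks, hklim⟩ := mem_closure_iff_seq_limit.mp hkmem
    have : Tendsto (fun n => js n * ks n) atTop (𝓝 (j * k)) := hjlim.mul hklim
    refine hDclosed.closure_subset (mem_closure_of_tendsto this ?_)
    filter_upwards with n
    exact hspan _ (hjs n) _ (hks n)
  -- prodSet J K ⊆ D
  have hPD : prodSet J K ⊆ D := by
    refine closed_span_subset ⟨hDclosed, hD0, hDadd, hDsmul, hDmul⟩ ?_
    rintro z ⟨j, hjmem, k, hkmem, rfl⟩
    exact hprod j hjmem k hkmem
  -- D ⊆ prodSet J K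
  have hDP : D ⊆ prodSet J K := by
    intro d hd
    refine mem_closure_of_tendsto (he_lim d hd).2 ?_
    filter_upwards with t
    have : d * e t ∈ {z : B | ∃ x ∈ J, ∃ y ∈ K, z = x * y} :=
      ⟨d, hDJ hd, e t, hDK (he_mem t), rfl⟩
    exact Submodule.subset_span (R := ℂ) this
  have hJKeqD : J ∩ K = D := Set.Subset.antisymm hJKD (Set.subset_inter hDJ hDK)
  refine ⟨?_, hJKeqD⟩
  rw [hJKeqD]
  exact Set.Subset.antisymm hPD hDP
end

section
/- Let A be a norm-closed subalgebra of a C*-algebra B, and let J be an r-ideal of A. Then JB (the norm-closure of the linear span of products j b with j ∈ J, b ∈ B) is a norm-closed right ideal of B; any left contractive approximate identity for J is also a left contractive approximate identity for JB; and JB ∩ A = J. Consequently, the map J ↦ JB from the set of r-ideals of A into the set of closed right ideals of B is injective. -/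
open Filter Topology

section Aux

variable {B : Type*} [NonUnitalCStarAlgebra B]

private lemma aux_span_mul_mem (J : Set B) {z : B}
    (hz : z ∈ Submodule.span ℂ {z : B | ∃ x ∈ J, ∃ y ∈ (Set.univ : Set B), z = x * y})
    (b : B) :
    z * b ∈ Submodule.span ℂ {z : B | ∃ x ∈ J, ∃ y ∈ (Set.univ : Set B), z = x * y} := by
  induction hz using Submodule.span_induction with
  | mem z hz =>
    obtain ⟨j, hj, c, -, rfl⟩ := hz
    exact Submodule.subset_span ⟨j, hj, c * b, trivial, (mul_assoc _ _ _)⟩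
  | zero => simpa using Submodule.zero_mem _
  | add x y hx hy ihx ihy => simpa [add_mul] using Submodule.add_mem _ ihx ihy
  | smul c x hx ih => simpa [smul_mul_assoc] using Submodule.smul_mem _ c ih

private lemma aux_tendsto_prodSet (J : Set B) {ι : Type} [Preorder ι] (e : ι → B)
    (he1 : ∀ t, ‖e t‖ ≤ 1)
    (hcai : ∀ x ∈ J, Tendsto (fun t => e t * x) atTop (𝓝 x)) :
    ∀ x ∈ prodSet J (Set.univ : Set B), Tendsto (fun t => e t * x) atTop (𝓝 x) := by
  have hspan : ∀ z ∈ Submodule.span ℂ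
      {z : B | ∃ x ∈ J, ∃ y ∈ (Set.univ : Set B), z = x * y},
      Tendsto (fun t => e t * z) atTop (𝓝 z) := by
    intro z hz
    induction hz using Submodule.span_induction with
    | mem z hz =>
      obtain ⟨j, hj, b, -, rfl⟩ := hz
      have : Tendsto (fun t => (e t * j) * b) atTop (𝓝 (j * b)) :=
        (hcai j hj).mul tendsto_const_nhds
      simpa [mul_assoc] using this
    | zero => simpa using (tendsto_const_nhds : Tendsto (fun _ : ι => (0 : B)) atTop (𝓝 0))
    | add x y hx hy ihx ihy => simpa [mul_add] using ihx.add ihy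
    | smul c x hx ih => simpa [mul_smul_comm] using ih.const_smul c
  intro x hx
  rw [Metric.tendsto_nhds]
  intro ε hε
  obtain ⟨y, hyS, hxy⟩ := Metric.mem_closure_iff.mp hx (ε / 3) (by positivity)
  have hy := hspan y hyS
  filter_upwards [Metric.tendsto_nhds.mp hy (ε / 3) (by positivity)] with t ht
  have h1 : dist (e t * x) (e t * y) ≤ dist x y := by
    rw [dist_eq_norm, dist_eq_norm, ← mul_sub]
    calc ‖e t * (x - y)‖ ≤ ‖e t‖ * ‖x - y‖ := norm_mul_le _ _
      _ ≤ 1 * ‖x - y‖ := by gcongr; exact he1 t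
      _ = ‖x - y‖ := one_mul _
  have h2 : dist y x < ε / 3 := by rw [dist_comm]; exact hxy
  calc dist (e t * x) x ≤ dist (e t * x) (e t * y) + dist (e t * y) y + dist y x :=
        dist_triangle4 _ _ _ _
    _ < ε := by linarith

private lemma aux_subset_prodSet {A J : Set B} (hJ : IsRIdeal A J) :
    J ⊆ prodSet J (Set.univ : Set B) := by
  obtain ⟨-, -, -, -, -, -, ι, iP, iD, iN, e, heJ, -, hcai⟩ := hJ
  letI := iP; letI := iD; letI := iN
  intro x hx
  show x ∈ closure (Submodule.span ℂ {z : B | ∃ x ∈ J, ∃ y ∈ (Set.univ : Set B), z = x * y} : Set B)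
  refine mem_closure_of_tendsto (hcai x hx) (Eventually.of_forall fun t => ?_)
  have hmem : e t * x ∈ {z : B | ∃ x ∈ J, ∃ y ∈ (Set.univ : Set B), z = x * y} :=
    ⟨e t, heJ t, x, trivial, rfl⟩
  exact Submodule.subset_span hmem

private lemma aux_inter_eq {A J : Set B} (hJ : IsRIdeal A J) :
    prodSet J (Set.univ : Set B) ∩ A = J := by
  apply Set.Subset.antisymm
  · rintro x ⟨hx, hxA⟩
    obtain ⟨hJc, -, -, -, -, hJr, ι, iP, iD, iN, e, heJ, he1, hcai⟩ := hJ
    letI := iP; letI := iD; letI := iN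
    have hten := aux_tendsto_prodSet J e he1 hcai x hx
    exact hJc.mem_of_tendsto hten (Eventually.of_forall fun t => hJr _ (heJ t) _ hxA)
  · intro x hx
    exact ⟨aux_subset_prodSet hJ hx, hJ.2.1 hx⟩

end Aux

/-- For an r-ideal `J` of a closed subalgebra `A` of a C*-algebra `B`,
`JB` is a closed right ideal of `B`, any left cai of `J` is a left cai of `JB`,
`JB ∩ A = J`, and hence `J ↦ JB` is injective on r-ideals of `A`. -/
theorem rIdeal_extension_to_cstar {B : Type*} [NonUnitalCStarAlgebra B]
    (A : Set B) (hA : IsClosedSubalg A)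
    (J : Set B) (hJ : IsRIdeal A J) :
    (IsClosed (prodSet J (Set.univ : Set B)) ∧
      (0 : B) ∈ prodSet J (Set.univ : Set B) ∧
      (∀ x ∈ prodSet J (Set.univ : Set B), ∀ y ∈ prodSet J (Set.univ : Set B),
        x + y ∈ prodSet J (Set.univ : Set B)) ∧
      (∀ (c : ℂ), ∀ x ∈ prodSet J (Set.univ : Set B), c • x ∈ prodSet J (Set.univ : Set B)) ∧
      (∀ x ∈ prodSet J (Set.univ : Set B), ∀ b : B, x * b ∈ prodSet J (Set.univ : Set B))) ∧
    (∀ (ι : Type) (_ : Preorder ι) (_ : IsDirected ι (· ≤ ·)) (_ : Nonempty ι) (e : ι → B),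
      (∀ t, e t ∈ J) → (∀ t, ‖e t‖ ≤ 1) →
      (∀ x ∈ J, Tendsto (fun t => e t * x) atTop (𝓝 x)) →
      (∀ t, e t ∈ prodSet J (Set.univ : Set B)) ∧
        ∀ x ∈ prodSet J (Set.univ : Set B), Tendsto (fun t => e t * x) atTop (𝓝 x)) ∧
    prodSet J (Set.univ : Set B) ∩ A = J ∧
    Set.InjOn (fun J' : Set B => prodSet J' (Set.univ : Set B)) {J' : Set B | IsRIdeal A J'} := by
  refine ⟨⟨isClosed_closure, ?_, ?_, ?_, ?_⟩, ?_, aux_inter_eq hJ, ?_⟩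
  · exact subset_closure (Submodule.zero_mem _)
  · intro x hx y hy
    exact map_mem_closure₂ continuous_add hx hy fun a ha b hb => Submodule.add_mem _ ha hb
  · intro c x hx
    exact map_mem_closure (continuous_const_smul c) hx fun a ha => Submodule.smul_mem _ c ha
  · intro x hx b
    exact map_mem_closure (f := fun y : B => y * b) (continuous_mul_right b) hx fun a ha => aux_span_mul_mem J ha b
  · intro ι iP iD iN e heJ he1 hcai
    letI := iP; letI := iD; letI := iN
    exact ⟨fun t => aux_subset_prodSet hJ (heJ t), aux_tendsto_prodSet J e he1 hcai⟩
  · intro J1 h1 J2 h2 heq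
    simp only at heq
    rw [← aux_inter_eq h1, ← aux_inter_eq h2, heq]
end

section
/- Let B be a unital C*-algebra, let p ∈ B be a projection with q = 1 − p, and let g be a bounded linear functional on B. Define bounded linear functionals g_p and g_q on B by g_p(b) = g(p b p) and g_q(b) = g(q b q). Then ‖g_p + g_q‖ = ‖g_p‖ + ‖g_q‖, and this common value is at most ‖g‖. -/
/-!
For corners `x = p a p` and `y = q b q` the cross terms of `(x + y)⋆(x + y)` vanish and
`x⋆x ≤ ‖x‖² p`, `y⋆y ≤ ‖y‖² q`, so `(x + y)⋆(x + y) ≤ max(‖x‖, ‖y‖)² (p + q)`; hence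
`‖p a p + q b q‖ ≤ max ‖a‖ ‖b‖`. With `a = b` this makes the pinching `b ↦ p b p + q b q`
contractive, giving `‖g_p + g_q‖ ≤ ‖g‖`. With `a`, `b` in the unit ball nearly norming `g_p`,
`g_q` and rotated by phases, `(g_p + g_q)(p a p + q b q) = g_p a + g_q b` is close to
`‖g_p‖ + ‖g_q‖`, giving the reverse triangle inequality.
-/

namespace IsIdempotentElem

variable {R : Type*} [Ring R] {p : R}

lemma mul_corner_add_corner_mul (hp : IsIdempotentElem p) (x y : R) :
    p * (p * x * p + (1 - p) * y * (1 - p)) * p = p * x * p := by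
  have hpp : p * p = p := hp.eq
  have hpq : p * (1 - p) = 0 := hp.mul_one_sub_self
  simp only [mul_add, ← mul_assoc, hpp, hpq, zero_mul, add_zero]
  rw [mul_assoc (p * x), hpp]

lemma one_sub_mul_corner_add_corner_mul (hp : IsIdempotentElem p) (x y : R) :
    (1 - p) * (p * x * p + (1 - p) * y * (1 - p)) * (1 - p) = (1 - p) * y * (1 - p) := by
  simpa [add_comm] using hp.one_sub.mul_corner_add_corner_mul y x

end IsIdempotentElem

namespace IsStarProjection

variable {A : Type*}

lemma norm_mul_mul_self_le [NonUnitalNormedRing A] [StarRing A] [CStarRing A] {e : A}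
    (he : IsStarProjection e) (a : A) : ‖e * a * e‖ ≤ ‖a‖ :=
  calc ‖e * a * e‖ ≤ ‖e‖ * ‖a‖ * ‖e‖ := norm_mul₃_le
    _ ≤ 1 * ‖a‖ * 1 := by gcongr <;> exact he.norm_le
    _ = ‖a‖ := by ring

lemma star_mul_self_le_norm_sq_smul [NonUnitalCStarAlgebra A] [PartialOrder A]
    [StarOrderedRing A] {e x : A} (he : IsStarProjection e) (hx : x * e = x) :
    star x * x ≤ ‖x‖ ^ 2 • e :=
  calc star x * x = star e * (star x * x) * e := by
        conv_lhs => rw [← hx]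
        simp only [star_mul, mul_assoc]
    _ ≤ ‖star x * x‖ • (star e * e) := CStarAlgebra.star_left_conjugate_le_norm_smul
    _ = ‖x‖ ^ 2 • e := by
        rw [CStarRing.norm_star_mul_self, he.isSelfAdjoint.star_eq, he.isIdempotentElem.eq, sq]

lemma norm_corner_add_corner_le [CStarAlgebra A] {e : A} (he : IsStarProjection e) (a b : A) :
    ‖e * a * e + (1 - e) * b * (1 - e)‖ ≤ max ‖a‖ ‖b‖ := by
  let _ := CStarAlgebra.spectralOrder A
  let _ := CStarAlgebra.spectralOrderedRing A
  have hq := he.one_sub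
  set q := 1 - e
  set x := e * a * e
  set y := q * b * q
  set M := max ‖a‖ ‖b‖
  have hxM : ‖x‖ ≤ M := (he.norm_mul_mul_self_le a).trans (le_max_left _ _)
  have hyM : ‖y‖ ≤ M := (hq.norm_mul_mul_self_le b).trans (le_max_right _ _)
  have hxe : x * e = x := by simp only [x, mul_assoc, he.isIdempotentElem.eq]
  have hyq : y * q = y := by simp only [y, mul_assoc, hq.isIdempotentElem.eq]
  have hxy : star x * y = 0 := by
    simp only [x, y, q, star_mul, he.isSelfAdjoint.star_eq, mul_assoc,
      ← mul_assoc e (1 - e), he.isIdempotentElem.mul_one_sub_self, zero_mul, mul_zero]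
  have hyx : star y * x = 0 := by
    simp only [x, y, q, star_mul, hq.isSelfAdjoint.star_eq, mul_assoc,
      ← mul_assoc (1 - e) e, he.isIdempotentElem.one_sub_mul_self, zero_mul, mul_zero]
  have hsq : star (x + y) * (x + y) ≤ algebraMap ℝ A (M ^ 2) :=
    calc star (x + y) * (x + y) = star x * x + star y * y := by
          simp only [star_add, add_mul, mul_add, hxy, hyx, add_zero, zero_add]
      _ ≤ ‖x‖ ^ 2 • e + ‖y‖ ^ 2 • q := by
          gcongr
          exacts [he.star_mul_self_le_norm_sq_smul hxe, hq.star_mul_self_le_norm_sq_smul hyq]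
      _ ≤ M ^ 2 • e + M ^ 2 • q := by
          gcongr
          exacts [he.nonneg, hq.nonneg]
      _ = algebraMap ℝ A (M ^ 2) := by
          rw [← smul_add, add_sub_cancel, Algebra.algebraMap_eq_smul_one]
  have hM : 0 ≤ M := (norm_nonneg a).trans (le_max_left _ _)
  rw [← CStarAlgebra.norm_le_iff_le_algebraMap _ (by positivity) (star_mul_self_nonneg _),
    CStarRing.norm_star_mul_self, ← sq] at hsq
  exact (pow_le_pow_iff_left₀ (norm_nonneg _) hM two_ne_zero).mp hsq

end IsStarProjection

namespace ContinuousLinearMap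

variable {𝕜 E : Type*} [RCLike 𝕜] [NormedAddCommGroup E] [NormedSpace 𝕜 E] {f g : E →L[𝕜] 𝕜}

lemma norm_apply_add_norm_apply_le_norm_add
    (h : ∀ x y : E, ‖x‖ < 1 → ‖y‖ < 1 → ∃ z, ‖z‖ ≤ 1 ∧ (f + g) z = f x + g y)
    {x y : E} (hx : ‖x‖ < 1) (hy : ‖y‖ < 1) : ‖f x‖ + ‖g y‖ ≤ ‖f + g‖ := by
  obtain ⟨c, hc, hcx⟩ := RCLike.exists_norm_eq_mul_self (f x)
  obtain ⟨d, hd, hdy⟩ := RCLike.exists_norm_eq_mul_self (g y)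
  obtain ⟨z, hz, hfgz⟩ := h (c • x) (d • y) (by rwa [norm_smul, hc, one_mul])
    (by rwa [norm_smul, hd, one_mul])
  have hval : (f + g) z = ((‖f x‖ + ‖g y‖ : ℝ) : 𝕜) := by
    rw [hfgz, map_smul, map_smul, smul_eq_mul, smul_eq_mul, ← hcx, ← hdy, RCLike.ofReal_add]
  calc ‖f x‖ + ‖g y‖ = ‖(f + g) z‖ := by
        rw [hval, RCLike.norm_of_nonneg (by positivity)]
    _ ≤ ‖f + g‖ * 1 := (f + g).le_opNorm_of_le hz
    _ = ‖f + g‖ := mul_one _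

lemma norm_add_eq_of_forall_exists_apply_eq
    (h : ∀ x y : E, ‖x‖ < 1 → ‖y‖ < 1 → ∃ z, ‖z‖ ≤ 1 ∧ (f + g) z = f x + g y) :
    ‖f + g‖ = ‖f‖ + ‖g‖ := by
  refine le_antisymm (norm_add_le f g) (le_of_forall_pos_lt_add fun ε hε ↦ ?_)
  obtain ⟨x, hx, hfx⟩ := f.exists_lt_apply_of_lt_opNorm (r := ‖f‖ - ε / 2) (by linarith)
  obtain ⟨y, hy, hgy⟩ := g.exists_lt_apply_of_lt_opNorm (r := ‖g‖ - ε / 2) (by linarith)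
  linarith [norm_apply_add_norm_apply_le_norm_add h hx hy]

end ContinuousLinearMap

/-- In a unital C*-algebra, if `p` is a projection, `q = 1 - p`, and `g`
is a bounded linear functional, then the functionals `g_p : b ↦ g (p b p)` and
`g_q : b ↦ g (q b q)` satisfy `‖g_p + g_q‖ = ‖g_p‖ + ‖g_q‖ ≤ ‖g‖`. -/
theorem norm_corner_functionals_add {B : Type*} [CStarAlgebra B]
    (p : B) (hp_star : star p = p) (hp_idem : p * p = p) (q : B) (hq : q = 1 - p)
    (g gp gq : B →L[ℂ] ℂ)
    (hgp : ∀ b : B, gp b = g (p * b * p)) (hgq : ∀ b : B, gq b = g (q * b * q)) :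
    ‖gp + gq‖ = ‖gp‖ + ‖gq‖ ∧ ‖gp‖ + ‖gq‖ ≤ ‖g‖ := by
  subst hq
  have hp : IsStarProjection p := ⟨hp_idem, hp_star⟩
  have hadd : ‖gp + gq‖ = ‖gp‖ + ‖gq‖ := by
    refine ContinuousLinearMap.norm_add_eq_of_forall_exists_apply_eq fun x y hx hy ↦ ?_
    refine ⟨p * x * p + (1 - p) * y * (1 - p), ?_, ?_⟩
    · exact (hp.norm_corner_add_corner_le x y).trans (max_le hx.le hy.le)
    · rw [add_apply, hgp, hgq, hgp, hgq, hp.isIdempotentElem.mul_corner_add_corner_mul,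
        hp.isIdempotentElem.one_sub_mul_corner_add_corner_mul]
  have hle : ‖gp + gq‖ ≤ ‖g‖ := by
    refine ContinuousLinearMap.opNorm_le_bound _ (norm_nonneg g) fun b ↦ ?_
    rw [add_apply, hgp, hgq, ← map_add]
    calc _ ≤ ‖g‖ * ‖p * b * p + (1 - p) * b * (1 - p)‖ := g.le_opNorm _
      _ ≤ ‖g‖ * ‖b‖ := by
        gcongr
        simpa using hp.norm_corner_add_corner_le b b
  exact ⟨hadd, hadd ▸ hle⟩
end

section
/- Let A be a unital norm-closed subalgebra of a unital C*-algebra (with the same unit 1), and let a ∈ A with ‖a‖ ≤ 1. Let J be the norm-closure of (1−a)A. Then J is a norm-closed right ideal of A; setting x_n = (1/n) Σ_{k=1}^{n} a^k, one has ‖x_n‖ ≤ 1, the elements e_n = 1 − x_n belong to J, and (e_n) is a left approximate identity for J (that is, e_n x → x in norm for all x ∈ J); moreover J possesses a left contractive approximate identity, so J is an r-ideal of A. -/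
open Filter Topology

/-!
The Cesàro means `x n` of the powers of `a` satisfy `n • x n * (1 - a) = a - a ^ (n + 1)`, so
`(1 - x n) * (1 - a) → 1 - a`; as `1 - x n` is bounded, it is a left approximate identity on all
of `J = closure ((1 - a) A)`. It is only bounded by `2`, however. A contractive one is
`1 - z n = n • (1 - a) * z n` with `z n = (1 + n • (1 - a))⁻¹`, a Neumann series in `A`:
since `‖a‖ ≤ 1`, `X = n • (1 - a)` has `X + X⋆ ≥ 0`, hence `X⋆ X ≤ (1 + X)⋆ (1 + X)` and
`‖X z‖ ≤ 1` whenever `(1 + X) z = 1`, while `n • (z n * (1 - a)) = 1 - z n` gives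
`z n * (1 - a) → 0`.
-/

section ApproximateIdentity
variable {R : Type*} [SeminormedRing R]

theorem tendsto_mul_of_mem_closure_mul_left {ι : Type*} {l : Filter ι} {e : ι → R} {C : ℝ}
    (hC : ∀ i, ‖e i‖ ≤ C) {g : R} (hg : Tendsto (fun i => e i * g) l (𝓝 g)) {A : Set R}
    {u : R} (hu : u ∈ closure {y | ∃ x ∈ A, y = g * x}) :
    Tendsto (fun i => e i * u) l (𝓝 u) := by
  have hLip : ∀ i, LipschitzWith C.toNNReal (e i * ·) := fun i =>
    LipschitzWith.of_dist_le_mul fun x y => by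
      rw [dist_eq_norm, dist_eq_norm, ← mul_sub]
      exact (norm_mul_le _ _).trans
        (mul_le_mul_of_nonneg_right ((hC i).trans (Real.le_coe_toNNReal C)) (norm_nonneg _))
  refine closure_minimal ?_ ((LipschitzWith.uniformEquicontinuous _ _ hLip).equicontinuous
    |>.isClosed_setOfPred_tendsto continuous_id) hu
  rintro _ ⟨x, -, rfl⟩
  simpa only [Set.mem_ofPred_eq, id, mul_assoc] using hg.mul_const x

theorem tendsto_zero_of_natCast_mul_norm_le {E : Type*} [SeminormedAddCommGroup E]
    {y : ℕ → E} {C : ℝ} (h : ∀ n : ℕ, n * ‖y n‖ ≤ C) : Tendsto y atTop (𝓝 0) := by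
  refine squeeze_zero_norm' ?_ (tendsto_const_div_atTop_nhds_zero_nat C)
  filter_upwards [eventually_gt_atTop 0] with n hn
  rw [le_div_iff₀' (Nat.cast_pos.mpr hn)]
  exact h n

end ApproximateIdentity

section PowMean
variable (𝕜 : Type*) {B : Type*} [RCLike 𝕜] [NormedRing B] [NormedAlgebra 𝕜 B]

def powMean (a : B) (n : ℕ) : B := (n : 𝕜)⁻¹ • ∑ k ∈ Finset.Icc 1 n, a ^ k

variable {𝕜} {a : B}

theorem norm_powMean_le_one (hna : ‖a‖ ≤ 1) (n : ℕ) : ‖powMean 𝕜 a n‖ ≤ 1 := by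
  have hsum : ‖∑ k ∈ Finset.Icc 1 n, a ^ k‖ ≤ n := by
    refine (norm_sum_le _ _).trans ?_
    simpa using Finset.sum_le_card_nsmul _ _ 1 fun k hk =>
      (norm_pow_le' a (zero_lt_one.trans_le (Finset.mem_Icc.mp hk).1)).trans
        (pow_le_one₀ (norm_nonneg a) hna)
  rw [powMean, norm_smul, norm_inv, RCLike.norm_natCast]
  rcases eq_or_ne n 0 with rfl | hn
  · simp
  · exact inv_mul_le_one_of_le₀ hsum (Nat.cast_nonneg n)

theorem sum_Icc_pow_mul_one_sub (a : B) (n : ℕ) :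
    (∑ k ∈ Finset.Icc 1 n, a ^ k) * (1 - a) = a - a ^ (n + 1) := by
  induction n with
  | zero => simp
  | succ n ih =>
    rw [Finset.sum_Icc_succ_top (by omega), add_mul, ih, pow_succ _ (n + 1)]
    noncomm_ring

theorem tendsto_one_sub_powMean_mul_one_sub (hna : ‖a‖ ≤ 1) :
    Tendsto (fun n => (1 - powMean 𝕜 a n) * (1 - a)) atTop (𝓝 (1 - a)) := by
  have hbound : ∀ n : ℕ, n * ‖powMean 𝕜 a n * (1 - a)‖ ≤ 2 := by
    intro n
    have h2 : ‖a - a ^ (n + 1)‖ ≤ 2 := by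
      refine (norm_sub_le _ _).trans ?_
      linarith [(norm_pow_le' a n.succ_pos).trans (pow_le_one₀ (norm_nonneg a) hna)]
    rw [powMean, smul_mul_assoc, sum_Icc_pow_mul_one_sub, norm_smul, norm_inv,
      RCLike.norm_natCast, ← mul_assoc]
    rcases eq_or_ne n 0 with rfl | hn
    · simp
    · rwa [mul_inv_cancel₀ (Nat.cast_ne_zero.mpr hn), one_mul]
  simpa [sub_mul] using tendsto_const_nhds.sub (tendsto_zero_of_natCast_mul_norm_le hbound)

theorem one_sub_powMean {n : ℕ} (hn : n ≠ 0) :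
    1 - powMean 𝕜 a n =
      (1 - a) * ((n : 𝕜)⁻¹ • ∑ k ∈ Finset.Icc 1 n, ∑ i ∈ Finset.range k, a ^ i) := by
  rw [mul_smul_comm, Finset.mul_sum]
  simp_rw [mul_neg_geom_sum]
  rw [powMean, Finset.sum_sub_distrib, smul_sub, Finset.sum_const, Nat.card_Icc,
    Nat.add_sub_cancel, ← Nat.cast_smul_eq_nsmul 𝕜, smul_smul,
    inv_mul_cancel₀ (Nat.cast_ne_zero.mpr hn), one_smul]

end PowMean

section Neumann
variable {B : Type*} [NormedRing B]

theorem isUnit_one_add_nsmul_one_sub (𝕜 : Type*) [RCLike 𝕜] [NormedAlgebra 𝕜 B]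
    [HasSummableGeomSeries B] {a : B} (hna : ‖a‖ ≤ 1) (n : ℕ) :
    IsUnit (1 + n • (1 - a)) := by
  have hn : (n + 1 : 𝕜) ≠ 0 := by exact_mod_cast n.succ_ne_zero
  have hlt : ‖((n : 𝕜) / (n + 1)) • a‖ < 1 := by
    rw [norm_smul]
    refine (mul_le_of_le_one_right (norm_nonneg _) hna).trans_lt ?_
    rw [norm_div, RCLike.norm_natCast, ← Nat.cast_succ, RCLike.norm_natCast,
      div_lt_one (by positivity)]
    exact_mod_cast n.lt_succ_self
  have : (n + 1 : 𝕜) • (1 - ((n : 𝕜) / (n + 1)) • a) = 1 + n • (1 - a) := by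
    rw [smul_sub, smul_smul, mul_div_cancel₀ _ hn, add_smul, one_smul, Nat.cast_smul_eq_nsmul,
      Nat.cast_smul_eq_nsmul, smul_sub]
    abel
  rw [← this]
  exact (isUnit_one_sub_of_norm_lt_one hlt).smul (Units.mk0 _ hn)

theorem exists_mem_inverse_one_add_nsmul_one_sub {𝕜 : Type*} [RCLike 𝕜] [NormedAlgebra 𝕜 B]
    [CompleteSpace B] {A : Subalgebra 𝕜 B}
    (hA : IsClosed (A : Set B)) {a : B} (ha : a ∈ A) (hna : ‖a‖ ≤ 1) (n : ℕ) :
    ∃ z ∈ A, (1 + n • (1 - a)) * z = 1 ∧ z * (1 + n • (1 - a)) = 1 := by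
  have : CompleteSpace A := hA.completeSpace_coe
  obtain ⟨u, hu⟩ := isUnit_one_add_nsmul_one_sub 𝕜 (a := (⟨a, ha⟩ : A)) hna n
  have hu' : ((u : A) : B) = 1 + n • (1 - a) := by rw [hu]; rfl
  refine ⟨((u⁻¹ : Aˣ) : A), SetLike.coe_mem _, ?_, ?_⟩
  · rw [← hu', ← Subalgebra.coe_mul, u.mul_inv, Subalgebra.coe_one]
  · rw [← hu', ← Subalgebra.coe_mul, u.inv_mul, Subalgebra.coe_one]

end Neumann

section CStar
variable {B : Type*} [CStarAlgebra B] [PartialOrder B] [StarOrderedRing B]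

theorem nonneg_one_sub_add_star_one_sub {a : B} (hna : ‖a‖ ≤ 1) :
    0 ≤ (1 - a) + star (1 - a) := by
  have hle : star a * a ≤ 1 := by
    rw [← CStarAlgebra.norm_le_one_iff_of_nonneg _ (star_mul_self_nonneg a),
      CStarRing.norm_star_mul_self]
    exact mul_le_one₀ hna (norm_nonneg a) hna
  have : (1 - a) + star (1 - a) = star (1 - a) * (1 - a) + (1 - star a * a) := by
    rw [star_sub, star_one]; noncomm_ring
  rw [this]
  exact add_nonneg (star_mul_self_nonneg _) (sub_nonneg.mpr hle)

theorem norm_mul_le_one_of_one_add_mul_eq_one {X z : B} (hX : 0 ≤ X + star X)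
    (hz : (1 + X) * z = 1) : ‖X * z‖ ≤ 1 := by
  have hXX : star X * X ≤ star (1 + X) * (1 + X) := by
    have : star (1 + X) * (1 + X) = star X * X + (1 + (X + star X)) := by
      rw [star_add, star_one]; noncomm_ring
    rw [this]
    exact le_add_of_nonneg_right (add_nonneg zero_le_one hX)
  have hle : star (X * z) * (X * z) ≤ 1 := calc
    star (X * z) * (X * z) = star z * (star X * X) * z := by simp only [star_mul, mul_assoc]
    _ ≤ star z * (star (1 + X) * (1 + X)) * z := star_left_conjugate_le_conjugate hXX z
    _ = star ((1 + X) * z) * ((1 + X) * z) := by simp only [star_mul, mul_assoc]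
    _ = 1 := by rw [hz, star_one, one_mul]
  rw [← CStarAlgebra.norm_le_one_iff_of_nonneg _ (star_mul_self_nonneg _),
    CStarRing.norm_star_mul_self, ← sq] at hle
  exact (sq_le_one_iff₀ (norm_nonneg _)).mp hle

end CStar

section RightIdeal
variable {B : Type*} [NormedRing B] [NormedAlgebra ℂ B]

def IsClosedSubalg.toSubalgebra {A : Set B} (hA : IsClosedSubalg A) (h1A : (1 : B) ∈ A) :
    Subalgebra ℂ B where
  carrier := A
  mul_mem' hx hy := hA.2.2.2.2 _ hx _ hy
  one_mem' := h1A
  add_mem' hx hy := hA.2.2.1 _ hx _ hy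
  zero_mem' := hA.2.1
  algebraMap_mem' c := by simpa [Algebra.algebraMap_eq_smul_one] using hA.2.2.2.1 c 1 h1A

theorem closure_mul_left_eq_topologicalClosure (A : Subalgebra ℂ B) (g : B) :
    closure {y | ∃ x ∈ A, y = g * x} =
      ((Subalgebra.toSubmodule A).map (LinearMap.mulLeft ℂ g)).topologicalClosure := by
  rw [Submodule.topologicalClosure_coe]
  congr 1
  ext y
  simp [eq_comm]

theorem isRIdeal_closure_mul_left {A : Subalgebra ℂ B} (hA : IsClosed (A : Set B)) {g : B}
    (hg : g ∈ A) (hcai : HasLeftCai (closure {y | ∃ x ∈ A, y = g * x})) :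
    IsRIdeal A (closure {y | ∃ x ∈ A, y = g * x}) := by
  have hsub : closure {y | ∃ x ∈ A, y = g * x} ⊆ A :=
    closure_minimal (by rintro _ ⟨x, hx, rfl⟩; exact mul_mem hg hx) hA
  have hmul : ∀ u ∈ closure {y | ∃ x ∈ A, y = g * x}, ∀ v ∈ A,
      u * v ∈ closure {y | ∃ x ∈ A, y = g * x} := fun u hu v hv =>
    map_mem_closure (f := (· * v)) (continuous_mul_const v) hu fun _ ⟨x, hx, hy⟩ =>
      ⟨x * v, mul_mem hx hv, by simp only [hy, mul_assoc]⟩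
  rw [closure_mul_left_eq_topologicalClosure] at hcai hsub hmul ⊢
  exact ⟨Submodule.isClosed_topologicalClosure _, hsub, zero_mem _,
    fun _ hu _ hv => add_mem hu hv, fun c _ hu => Submodule.smul_mem _ c hu, hmul, hcai⟩

end RightIdeal

theorem hasLeftCai_closure_one_sub_mul {B : Type*} [CStarAlgebra B] {A : Subalgebra ℂ B}
    (hA : IsClosed (A : Set B)) {a : B} (ha : a ∈ A) (hna : ‖a‖ ≤ 1) :
    HasLeftCai (closure {y | ∃ x ∈ A, y = (1 - a) * x}) := by
  let := CStarAlgebra.spectralOrder B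
  have := CStarAlgebra.spectralOrderedRing B
  choose z hzA hwz hzw using exists_mem_inverse_one_add_nsmul_one_sub hA ha hna
  have he : ∀ n : ℕ, 1 - z n = (n • (1 - a)) * z n := fun n => by
    have h := hwz n
    rw [add_mul, one_mul] at h
    exact (eq_sub_of_add_eq' h).symm
  have he_norm : ∀ n : ℕ, ‖1 - z n‖ ≤ 1 := fun n => by
    rw [he n]
    refine norm_mul_le_one_of_one_add_mul_eq_one ?_ (hwz n)
    rw [star_nsmul, ← smul_add]
    exact nsmul_nonneg (nonneg_one_sub_add_star_one_sub hna) n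
  have hbound : ∀ n : ℕ, n * ‖z n * (1 - a)‖ ≤ 1 := fun n => by
    have h := hzw n
    rw [mul_add, mul_one, mul_smul_comm] at h
    rw [← nsmul_eq_mul, ← RCLike.norm_nsmul ℂ, eq_sub_of_add_eq' h]
    exact he_norm n
  have he_mem : ∀ n : ℕ, 1 - z n ∈ closure {y | ∃ x ∈ A, y = (1 - a) * x} := fun n =>
    subset_closure ⟨n • z n, nsmul_mem (hzA n) n, by rw [he n, smul_mul_assoc, mul_smul_comm]⟩
  have hg : Tendsto (fun n => (1 - z n) * (1 - a)) atTop (𝓝 (1 - a)) := by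
    simpa [sub_mul] using tendsto_const_nhds.sub (tendsto_zero_of_natCast_mul_norm_le hbound)
  exact ⟨ℕ, inferInstance, inferInstance, inferInstance, fun n => 1 - z n,
    he_mem, he_norm, fun u hu => tendsto_mul_of_mem_closure_mul_left he_norm hg hu⟩

/-- Let `A` be a unital closed subalgebra of a unital C*-algebra, and
`a ∈ A` with `‖a‖ ≤ 1`. Then `J = closure ((1-a)A)` is a closed right ideal of `A`;
with `x_n = (1/n) ∑_{k=1}^n a^k` one has `‖x_n‖ ≤ 1`, `e_n = 1 - x_n ∈ J` (for `n ≥ 1`),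
`(e_n)` is a left approximate identity for `J`, and `J` has a left cai: `J` is an r-ideal. -/
theorem singly_generated_rIdeal {B : Type*} [CStarAlgebra B]
    (A : Set B) (hA : IsClosedSubalg A) (h1A : (1 : B) ∈ A)
    (a : B) (haA : a ∈ A) (hna : ‖a‖ ≤ 1)
    (J : Set B) (hJ : J = closure {y : B | ∃ x ∈ A, y = (1 - a) * x})
    (x : ℕ → B) (hx : ∀ n : ℕ, x n = ((n : ℂ)⁻¹) • ∑ k ∈ Finset.Icc 1 n, a ^ k) :
    IsClosed J ∧ J ⊆ A ∧ (0 : B) ∈ J ∧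
      (∀ u ∈ J, ∀ v ∈ J, u + v ∈ J) ∧ (∀ (c : ℂ), ∀ u ∈ J, c • u ∈ J) ∧
      (∀ u ∈ J, ∀ v ∈ A, u * v ∈ J) ∧
      (∀ n : ℕ, ‖x n‖ ≤ 1) ∧ (∀ n : ℕ, 1 ≤ n → 1 - x n ∈ J) ∧
      (∀ u ∈ J, Tendsto (fun n : ℕ => (1 - x n) * u) atTop (𝓝 u)) ∧
      HasLeftCai J := by
  subst hJ
  obtain rfl : x = powMean ℂ a := funext hx
  let A' := hA.toSubalgebra h1A
  have ha' : a ∈ A' := haA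
  obtain ⟨hJc, hJA, hJ0, hJadd, hJsmul, hJmul, hcai⟩ :=
    isRIdeal_closure_mul_left (A := A') hA.1 (sub_mem (one_mem A') ha')
      (hasLeftCai_closure_one_sub_mul hA.1 ha' hna)
  refine ⟨hJc, hJA, hJ0, hJadd, hJsmul, hJmul, norm_powMean_le_one hna,
    fun n hn => subset_closure ⟨_, ?_, one_sub_powMean (by omega)⟩,
    fun u hu => tendsto_mul_of_mem_closure_mul_left (C := ‖(1 : B)‖ + 1)
      (fun n => (norm_sub_le _ _).trans (add_le_add le_rfl (norm_powMean_le_one hna n)))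
      (tendsto_one_sub_powMean_mul_one_sub hna) hu, hcai⟩
  exact A'.smul_mem (sum_mem fun k _ => sum_mem fun i _ => pow_mem ha' i) _
end

section
/- Let A be a unital norm-closed subalgebra of a unital C*-algebra (with the same unit 1), and let a ∈ A with ‖a‖ ≤ 1. Then the norm-closure D of (1−a)A(1−a) is a hereditary subalgebra of A: D is a norm-closed subalgebra of A satisfying D A D ⊆ D and possessing a contractive approximate identity; indeed D has an approximate identity of the form (1 − x_n) with x_n in the closed unit ball of A. -/
open Filter Topology

section Aux

variable {B : Type*} [NonUnitalNormedRing B]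

lemma cai_left_extend {S : Set B} {e : ℕ → B} (he : ∀ n, ‖e n‖ ≤ 1)
    (h : ∀ s ∈ S, Tendsto (fun n => e n * s) atTop (𝓝 s)) :
    ∀ d ∈ closure S, Tendsto (fun n => e n * d) atTop (𝓝 d) := by
  intro d hd
  rw [Metric.tendsto_atTop]
  intro ε hε
  obtain ⟨s, hs, hds⟩ := Metric.mem_closure_iff.mp hd (ε/3) (by positivity)
  obtain ⟨N, hN⟩ := Metric.tendsto_atTop.mp (h s hs) (ε/3) (by positivity)
  refine ⟨N, fun n hn => ?_⟩
  have key : e n * d - d = e n * (d - s) + (e n * s - s) + (s - d) := by noncomm_ring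
  have h1 : ‖e n * (d - s)‖ ≤ ‖d - s‖ := by
    calc ‖e n * (d - s)‖ ≤ ‖e n‖ * ‖d - s‖ := norm_mul_le _ _
      _ ≤ 1 * ‖d - s‖ := mul_le_mul_of_nonneg_right (he n) (norm_nonneg _)
      _ = ‖d - s‖ := one_mul _
  have h2 : ‖e n * s - s‖ < ε / 3 := by
    have := hN n hn; rwa [dist_eq_norm] at this
  have h3 : ‖d - s‖ < ε / 3 := by rwa [dist_eq_norm] at hds
  have h4 : ‖s - d‖ < ε / 3 := by rwa [norm_sub_rev]
  rw [dist_eq_norm, key]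
  exact lt_of_le_of_lt norm_add₃_le (by linarith)

lemma cai_right_extend {S : Set B} {e : ℕ → B} (he : ∀ n, ‖e n‖ ≤ 1)
    (h : ∀ s ∈ S, Tendsto (fun n => s * e n) atTop (𝓝 s)) :
    ∀ d ∈ closure S, Tendsto (fun n => d * e n) atTop (𝓝 d) := by
  intro d hd
  rw [Metric.tendsto_atTop]
  intro ε hε
  obtain ⟨s, hs, hds⟩ := Metric.mem_closure_iff.mp hd (ε/3) (by positivity)
  obtain ⟨N, hN⟩ := Metric.tendsto_atTop.mp (h s hs) (ε/3) (by positivity)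
  refine ⟨N, fun n hn => ?_⟩
  have key : d * e n - d = (d - s) * e n + (s * e n - s) + (s - d) := by noncomm_ring
  have h1 : ‖(d - s) * e n‖ ≤ ‖d - s‖ := by
    calc ‖(d - s) * e n‖ ≤ ‖d - s‖ * ‖e n‖ := norm_mul_le _ _
      _ ≤ ‖d - s‖ * 1 := mul_le_mul_of_nonneg_left (he n) (norm_nonneg _)
      _ = ‖d - s‖ := mul_one _
  have h2 : ‖s * e n - s‖ < ε / 3 := by
    have := hN n hn; rwa [dist_eq_norm] at this
  have h3 : ‖d - s‖ < ε / 3 := by rwa [dist_eq_norm] at hds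
  have h4 : ‖s - d‖ < ε / 3 := by rwa [norm_sub_rev]
  rw [dist_eq_norm, key]
  exact lt_of_le_of_lt norm_add₃_le (by linarith)

end Aux

/-- Let `A` be a unital closed subalgebra of a unital C*-algebra and
`a ∈ A` with `‖a‖ ≤ 1`. Then `D = closure ((1-a)A(1-a))` is a hereditary subalgebra of
`A`, and `D` has an approximate identity of the form `(1 - x_n)` with `x_n` in the
closed unit ball of `A`. -/
theorem singly_generated_hsa {B : Type*} [CStarAlgebra B]
    (A : Set B) (hA : IsClosedSubalg A) (h1A : (1 : B) ∈ A)
    (a : B) (haA : a ∈ A) (hna : ‖a‖ ≤ 1)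
    (D : Set B) (hD : D = closure {y : B | ∃ x ∈ A, y = (1 - a) * x * (1 - a)}) :
    IsHSA A D ∧
      ∃ x : ℕ → B, (∀ n, x n ∈ A) ∧ (∀ n, ‖x n‖ ≤ 1) ∧
        ∀ d ∈ D, Tendsto (fun n : ℕ => (1 - x n) * d) atTop (𝓝 d) ∧
          Tendsto (fun n : ℕ => d * (1 - x n)) atTop (𝓝 d) := by
  letI := CStarAlgebra.spectralOrder B
  haveI := CStarAlgebra.spectralOrderedRing B
  subst hD
  obtain ⟨hAc, hA0, hAadd, hAsmul, hAmul⟩ := hA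
  set b : B := 1 - a with hb
  set S : Set B := {y : B | ∃ x ∈ A, y = b * x * b} with hS
  have hbA : b ∈ A := by
    have h : b = 1 + (-1 : ℂ) • a := by
      rw [hb, neg_smul, one_smul]; abel
    rw [h]; exact hAadd _ h1A _ (hAsmul _ _ haA)
  -- the scalars
  set c : ℕ → ℂ := fun n => (n : ℂ) / ((n : ℂ) + 1) with hc
  have hne : ∀ n : ℕ, ((n : ℂ) + 1) ≠ 0 := fun n => Nat.cast_add_one_ne_zero n
  have hclt : ∀ n : ℕ, ‖c n • a‖ < 1 := by
    intro n
    have h1 : ‖c n‖ = (n : ℝ) / ((n : ℝ) + 1) := by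
      rw [hc]
      simp only [norm_div]
      rw [Complex.norm_natCast]
      congr 1
      have : ((n : ℂ) + 1) = ((n + 1 : ℕ) : ℂ) := by push_cast; ring
      rw [this, Complex.norm_natCast]; push_cast; ring
    have h2 : ‖c n‖ < 1 := by
      rw [h1, div_lt_one (by positivity)]; linarith
    calc ‖c n • a‖ = ‖c n‖ * ‖a‖ := norm_smul _ _
      _ ≤ ‖c n‖ * 1 := mul_le_mul_of_nonneg_left hna (norm_nonneg _)
      _ = ‖c n‖ := mul_one _
      _ < 1 := h2
  clear_value b
  set v : ℕ → Bˣ := fun n => Units.oneSub (c n • a) (hclt n) with hv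
  set x : ℕ → B := fun n => ((n : ℂ) + 1)⁻¹ • ((v n)⁻¹ : Bˣ) with hx
  -- x n ∈ A
  have hxA : ∀ n, x n ∈ A := by
    intro n
    have hpowA : ∀ k : ℕ, (c n • a) ^ k ∈ A := by
      intro k
      induction k with
      | zero => simpa using h1A
      | succ k ih => rw [pow_succ]; exact hAmul _ ih _ (hAsmul _ _ haA)
    have hpart : ∀ N : ℕ, ∑ k ∈ Finset.range N, (c n • a) ^ k ∈ A := by
      intro N
      induction N with
      | zero => simpa using hA0
      | succ N ih => rw [Finset.sum_range_succ]; exact hAadd _ ih _ (hpowA N)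
    have hsum : (((v n)⁻¹ : Bˣ) : B) = ∑' k : ℕ, (c n • a) ^ k := rfl
    have htsumA : (∑' k : ℕ, (c n • a) ^ k) ∈ A :=
      hAc.mem_of_tendsto (summable_geometric_of_norm_lt_one (hclt n)).hasSum.tendsto_sum_nat
        (Eventually.of_forall hpart)
    rw [hx]
    exact hAsmul _ _ (hsum ▸ htsumA)
  -- basic identity : 1 + n • b = ((n+1) : ℂ) • (v n)
  have hyv : ∀ n : ℕ, (1 : B) + n • b = ((n : ℂ) + 1) • ((v n : Bˣ) : B) := by
    intro n
    have hval : ((v n : Bˣ) : B) = 1 - c n • a := rfl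
    have hcc : ((n : ℂ) + 1) * c n = (n : ℂ) := by
      simp only [hc]; rw [mul_div_assoc']; exact mul_div_cancel_left₀ _ (hne n)
    have h2 : (n • b : B) = (n : ℂ) • b := (Nat.cast_smul_eq_nsmul ℂ n b).symm
    have h3 : ((n : ℂ) + 1) • ((1 : B) - c n • a) = ((n : ℂ) + 1) • (1 : B) - (n : ℂ) • a := by
      rw [smul_sub, smul_smul, hcc]
    rw [hval, h2, hb, h3]
    module
  have hmulL : ∀ n : ℕ, ((1 : B) + n • b) * x n = 1 := by
    intro n
    rw [hyv n, hx]
    show (((n : ℂ) + 1) • ((v n : Bˣ) : B)) * (((n : ℂ) + 1)⁻¹ • (((v n)⁻¹ : Bˣ) : B)) = 1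
    rw [smul_mul_smul_comm, mul_inv_cancel₀ (hne n), Units.mul_inv, one_smul]
  have hmulR : ∀ n : ℕ, x n * ((1 : B) + n • b) = 1 := by
    intro n
    rw [hyv n, hx]
    show (((n : ℂ) + 1)⁻¹ • (((v n)⁻¹ : Bˣ) : B)) * (((n : ℂ) + 1) • ((v n : Bˣ) : B)) = 1
    rw [smul_mul_smul_comm, inv_mul_cancel₀ (hne n), Units.inv_mul, one_smul]
  have hx0 : x 0 = 1 := by have := hmulL 0; simpa using this
  -- b commutes with x n
  have hcomm : ∀ n : ℕ, b * x n = x n * b := by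
    intro n
    rcases Nat.eq_zero_or_pos n with h0 | hpos
    · subst h0; simp [hx0]
    · have e1 : x n + n • (b * x n) = 1 := by
        rw [← hmulL n, add_mul, one_mul, smul_mul_assoc]
      have e2 : x n + n • (x n * b) = 1 := by
        rw [← hmulR n, mul_add, mul_one, mul_smul_comm]
      have e3 : (n : ℕ) • (b * x n) = n • (x n * b) := by
        have := e1.trans e2.symm
        exact add_left_cancel this
      rw [← Nat.cast_smul_eq_nsmul ℂ, ← Nat.cast_smul_eq_nsmul ℂ] at e3
      exact smul_right_injective B (Nat.cast_ne_zero.mpr hpos.ne') e3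
  -- 1 - x n = n • (b * x n)
  have hbx : ∀ n : ℕ, (1 : B) - x n = n • (b * x n) := by
    intro n
    have e1 : x n + n • (b * x n) = 1 := by
      rw [← hmulL n, add_mul, one_mul, smul_mul_assoc]
    rw [← e1]; abel
  clear_value x
  set e : ℕ → B := fun n => 1 - x n with he
  clear_value e
  -- order facts
  have hone_nonneg : (0 : B) ≤ 1 := by simpa using star_mul_self_nonneg (1 : B)
  have hsmul1 : ∀ r : ℝ, 0 ≤ r → (0 : B) ≤ r • 1 := by
    intro r hr
    have h : (r • 1 : B) = star (Real.sqrt r • 1) * (Real.sqrt r • 1) := by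
      rw [star_smul, star_one, smul_mul_smul_comm, one_mul, star_trivial,
        Real.mul_self_sqrt hr]
    rw [h]; exact star_mul_self_nonneg _
  have hbsum : (0 : B) ≤ b + star b := by
    have h1 : IsSelfAdjoint (a + star a) := by
      rw [IsSelfAdjoint, star_add, star_star, add_comm]
    have h2 : a + star a ≤ algebraMap ℝ B ‖a + star a‖ := h1.le_algebraMap_norm_self
    have h3 : ‖a + star a‖ ≤ 2 := by
      calc ‖a + star a‖ ≤ ‖a‖ + ‖star a‖ := norm_add_le _ _
        _ ≤ 2 := by rw [norm_star]; linarith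
    have h4 : algebraMap ℝ B ‖a + star a‖ ≤ (2 : ℝ) • 1 := by
      rw [Algebra.algebraMap_eq_smul_one, ← sub_nonneg, ← sub_smul]
      exact hsmul1 _ (by linarith)
    have h5 : a + star a ≤ (2 : ℝ) • 1 := h2.trans h4
    have h6 : b + star b = (2 : ℝ) • (1 : B) - (a + star a) := by
      rw [hb, star_sub, star_one]; module
    rw [h6]
    exact sub_nonneg.mpr h5
  have hyy : ∀ n : ℕ, star ((1 : B) + n • b) * ((1 : B) + n • b)
      = (1 + n • (b + star b)) + (n * n) • (star b * b) := by
    intro n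
    rw [star_add, star_one, star_nsmul]
    rw [add_mul, mul_add, mul_add, one_mul, mul_one, smul_mul_smul_comm, smul_add]
    simp only [one_mul, mul_one]
    abel
  have hone_le : ∀ n : ℕ, (1 : B) ≤ star ((1 : B) + n • b) * ((1 : B) + n • b) := by
    intro n
    rw [hyy n, add_assoc]
    exact le_add_of_nonneg_right
      (add_nonneg (nsmul_nonneg hbsum n) (nsmul_nonneg (star_mul_self_nonneg b) _))
  have hconj1 : ∀ n : ℕ,
      star (x n) * (star ((1 : B) + n • b) * ((1 : B) + n • b)) * x n = 1 := by
    intro n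
    have : star (x n) * (star ((1 : B) + n • b) * ((1 : B) + n • b)) * x n
        = star (((1 : B) + n • b) * x n) * (((1 : B) + n • b) * x n) := by
      simp [star_mul, mul_assoc]
    rw [this, hmulL n, star_one, one_mul]
  have hxle : ∀ n : ℕ, star (x n) * x n ≤ 1 := by
    intro n
    calc star (x n) * x n = star (x n) * 1 * x n := by rw [mul_one]
      _ ≤ star (x n) * (star ((1 : B) + n • b) * ((1 : B) + n • b)) * x n :=
          star_left_conjugate_le_conjugate (hone_le n) (x n)
      _ = 1 := hconj1 n
  have norm_le_one_of : ∀ z : B, star z * z ≤ 1 → ‖z‖ ≤ 1 := by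
    intro z hz
    have h1 : ‖star z * z‖ ≤ ‖(1 : B)‖ :=
      CStarAlgebra.norm_le_norm_of_nonneg_of_le (star_mul_self_nonneg z) hz
    rw [CStarRing.norm_star_mul_self] at h1
    have h2 : ‖(1 : B)‖ * ‖(1 : B)‖ = ‖(1 : B)‖ := by
      rw [← CStarRing.norm_star_mul_self (x := (1 : B)), star_one, one_mul]
    have ht : ‖(1 : B)‖ ≤ 1 := by nlinarith [norm_nonneg (1 : B)]
    have h3 : ‖z‖ * ‖z‖ ≤ 1 := h1.trans ht
    nlinarith [norm_nonneg z]
  have hnormx : ∀ n, ‖x n‖ ≤ 1 := fun n => norm_le_one_of _ (hxle n)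
  -- ‖e n‖ ≤ 1
  have hkey2 : ∀ n : ℕ, (n * n) • (star b * b) ≤ star ((1 : B) + n • b) * ((1 : B) + n • b) := by
    intro n
    rw [hyy n]
    exact le_add_of_nonneg_left (add_nonneg hone_nonneg (nsmul_nonneg hbsum n))
  have hestar : ∀ n : ℕ, star (e n) * e n = star (x n) * ((n * n) • (star b * b)) * x n := by
    intro n
    simp only [he]
    rw [hbx n]
    rw [star_nsmul, star_mul]
    rw [smul_mul_smul_comm]
    rw [mul_smul_comm, smul_mul_assoc]
    congr 1
    simp [mul_assoc]
  have hele : ∀ n : ℕ, star (e n) * e n ≤ 1 := by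
    intro n
    calc star (e n) * e n = star (x n) * ((n * n) • (star b * b)) * x n := hestar n
      _ ≤ star (x n) * (star ((1 : B) + n • b) * ((1 : B) + n • b)) * x n :=
          star_left_conjugate_le_conjugate (hkey2 n) (x n)
      _ = 1 := hconj1 n
  have hnorme : ∀ n, ‖e n‖ ≤ 1 := fun n => norm_le_one_of _ (hele n)
  -- the crucial norm bound
  have hbound : ∀ n : ℕ, (n : ℝ) * ‖x n * b‖ ≤ 1 := by
    intro n
    have h1 : (1 : B) - x n = n • (x n * b) := by rw [hbx n, hcomm n]
    have h2 : ‖(n : ℕ) • (x n * b)‖ = (n : ℝ) * ‖x n * b‖ := by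
      rw [← Nat.cast_smul_eq_nsmul ℝ, norm_smul, Real.norm_natCast]
    calc (n : ℝ) * ‖x n * b‖ = ‖(n : ℕ) • (x n * b)‖ := h2.symm
      _ = ‖(1 : B) - x n‖ := by rw [← h1]
      _ ≤ 1 := by simpa only [he] using hnorme n
  have hxb_le : ∀ n : ℕ, 1 ≤ n → ‖x n * b‖ ≤ 1 / (n : ℝ) := by
    intro n hn
    have hm0 : (0 : ℝ) < n := by exact_mod_cast hn
    rw [le_div_iff₀ hm0]
    calc ‖x n * b‖ * n = (n : ℝ) * ‖x n * b‖ := mul_comm _ _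
      _ ≤ 1 := hbound n
  -- convergence on elements of the form b * z and z * b
  have hleft : ∀ z : B, Tendsto (fun m => e m * (b * z)) atTop (𝓝 (b * z)) := by
    intro z
    rw [tendsto_iff_norm_sub_tendsto_zero]
    apply squeeze_zero' (Eventually.of_forall fun m => norm_nonneg _) ?_
      (tendsto_const_div_atTop_nhds_zero_nat ‖z‖)
    filter_upwards [eventually_ge_atTop 1] with m hm
    have hm0 : (0 : ℝ) < m := by exact_mod_cast hm
    have hkey : e m * (b * z) - b * z = -((x m * b) * z) := by
      simp only [he]
      noncomm_ring
    rw [hkey, norm_neg]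
    calc ‖(x m * b) * z‖ ≤ ‖x m * b‖ * ‖z‖ := norm_mul_le _ _
      _ ≤ (1 / (m : ℝ)) * ‖z‖ := mul_le_mul_of_nonneg_right (hxb_le m hm) (norm_nonneg _)
      _ = ‖z‖ / m := by ring
  have hright : ∀ z : B, Tendsto (fun m => (z * b) * e m) atTop (𝓝 (z * b)) := by
    intro z
    rw [tendsto_iff_norm_sub_tendsto_zero]
    apply squeeze_zero' (Eventually.of_forall fun m => norm_nonneg _) ?_
      (tendsto_const_div_atTop_nhds_zero_nat ‖z‖)
    filter_upwards [eventually_ge_atTop 1] with m hm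
    have hm0 : (0 : ℝ) < m := by exact_mod_cast hm
    have hkey : (z * b) * e m - z * b = -(z * (x m * b)) := by
      simp only [he]
      have hc1 : z * b * x m = z * (x m * b) := by rw [← hcomm m, ← mul_assoc]
      rw [mul_sub, mul_one, sub_sub_cancel_left, hc1]
    rw [hkey, norm_neg]
    calc ‖z * (x m * b)‖ ≤ ‖z‖ * ‖x m * b‖ := norm_mul_le _ _
      _ ≤ ‖z‖ * (1 / (m : ℝ)) := mul_le_mul_of_nonneg_left (hxb_le m hm) (norm_nonneg _)
      _ = ‖z‖ / m := by ring
  -- properties of the generating set S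
  have hSsub : S ⊆ A := by
    rintro y ⟨w, hw, rfl⟩
    exact hAmul _ (hAmul _ hbA _ hw) _ hbA
  have hS0 : (0 : B) ∈ S := ⟨0, hA0, by simp⟩
  have hSadd : ∀ y₁ ∈ S, ∀ y₂ ∈ S, y₁ + y₂ ∈ S := by
    rintro _ ⟨w₁, hw₁, rfl⟩ _ ⟨w₂, hw₂, rfl⟩
    exact ⟨w₁ + w₂, hAadd _ hw₁ _ hw₂, by noncomm_ring⟩
  have hSsmul : ∀ (q : ℂ), ∀ y ∈ S, q • y ∈ S := by
    rintro q _ ⟨w, hw, rfl⟩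
    exact ⟨q • w, hAsmul _ _ hw, by rw [mul_smul_comm, smul_mul_assoc]⟩
  have hSmul : ∀ y₁ ∈ S, ∀ y₂ ∈ S, y₁ * y₂ ∈ S := by
    rintro _ ⟨w₁, hw₁, rfl⟩ _ ⟨w₂, hw₂, rfl⟩
    refine ⟨w₁ * b * b * w₂, hAmul _ (hAmul _ (hAmul _ hw₁ _ hbA) _ hbA) _ hw₂, by noncomm_ring⟩
  have hSAS : ∀ y₁ ∈ S, ∀ q ∈ A, ∀ y₂ ∈ S, y₁ * q * y₂ ∈ S := by
    rintro _ ⟨w₁, hw₁, rfl⟩ q hq _ ⟨w₂, hw₂, rfl⟩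
    refine ⟨w₁ * b * q * b * w₂, ?_, by noncomm_ring⟩
    exact hAmul _ (hAmul _ (hAmul _ (hAmul _ hw₁ _ hbA) _ hq) _ hbA) _ hw₂
  -- convergence for elements of S, and extension to the closure
  have hSL : ∀ s ∈ S, Tendsto (fun n => e n * s) atTop (𝓝 s) := by
    rintro _ ⟨w, hw, rfl⟩
    have h : b * w * b = b * (w * b) := by rw [mul_assoc]
    rw [h]; exact hleft (w * b)
  have hSR : ∀ s ∈ S, Tendsto (fun n => s * e n) atTop (𝓝 s) := by
    rintro _ ⟨w, hw, rfl⟩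
    exact hright (b * w)
  have hLD : ∀ d ∈ closure S, Tendsto (fun n => e n * d) atTop (𝓝 d) :=
    cai_left_extend hnorme hSL
  have hRD : ∀ d ∈ closure S, Tendsto (fun n => d * e n) atTop (𝓝 d) :=
    cai_right_extend hnorme hSR
  -- e n ∈ closure S
  have hebz : ∀ n : ℕ, e n = b * ((n : ℕ) • x n) := by
    intro n
    simp only [he]
    rw [hbx n, mul_smul_comm]
  have hzA : ∀ n : ℕ, ((n : ℕ) • x n) ∈ A := by
    intro n
    rw [← Nat.cast_smul_eq_nsmul ℂ]
    exact hAsmul _ _ (hxA n)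
  have heeS : ∀ m n : ℕ, e m * e n ∈ S := by
    intro m n
    refine ⟨((m : ℕ) • x m) * ((n : ℕ) • x n), hAmul _ (hzA m) _ (hzA n), ?_⟩
    rw [hebz m, hebz n]
    have hcz : b * ((n : ℕ) • x n) = ((n : ℕ) • x n) * b := by
      rw [mul_smul_comm, smul_mul_assoc, hcomm n]
    calc (b * ((m : ℕ) • x m)) * (b * ((n : ℕ) • x n))
        = (b * ((m : ℕ) • x m)) * (((n : ℕ) • x n) * b) := by rw [hcz]
      _ = b * (((m : ℕ) • x m) * ((n : ℕ) • x n)) * b := by noncomm_ring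
  have heD : ∀ n : ℕ, e n ∈ closure S := by
    intro n
    have ht : Tendsto (fun m => e m * e n) atTop (𝓝 (e n)) := by
      conv in (e _ * e n) => rw [hebz n]
      conv in (𝓝 (e n)) => rw [hebz n]
      exact hleft ((n : ℕ) • x n)
    exact mem_closure_of_tendsto ht (Eventually.of_forall fun m => heeS m n)
  -- the closure is a closed subalgebra
  have hDadd : ∀ y₁ ∈ closure S, ∀ y₂ ∈ closure S, y₁ + y₂ ∈ closure S := by
    intro y₁ h₁ y₂ h₂
    exact map_mem_closure₂ continuous_add h₁ h₂ hSadd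
  have hDsmul : ∀ (q : ℂ), ∀ y ∈ closure S, q • y ∈ closure S := by
    intro q y hy
    exact map_mem_closure (continuous_const_smul q) hy (fun z hz => hSsmul q z hz)
  have hDmul : ∀ y₁ ∈ closure S, ∀ y₂ ∈ closure S, y₁ * y₂ ∈ closure S := by
    intro y₁ h₁ y₂ h₂
    exact map_mem_closure₂ continuous_mul h₁ h₂ hSmul
  have hDAD : ∀ d₁ ∈ closure S, ∀ q ∈ A, ∀ d₂ ∈ closure S, d₁ * q * d₂ ∈ closure S := by
    intro d₁ h₁ q hq d₂ h₂
    have hcont : Continuous (fun p : B × B => p.1 * q * p.2) :=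
      (continuous_fst.mul continuous_const).mul continuous_snd
    exact map_mem_closure₂ (f := fun u v => u * q * v) hcont h₁ h₂
      (fun z₁ hz₁ z₂ hz₂ => hSAS z₁ hz₁ q hq z₂ hz₂)
  refine ⟨⟨⟨isClosed_closure, subset_closure hS0, hDadd, hDsmul, hDmul⟩,
      closure_minimal hSsub hAc, hDAD,
      ⟨ℕ, inferInstance, inferInstance, inferInstance, e, heD, hnorme,
        fun d hd => ⟨hLD d hd, hRD d hd⟩⟩⟩,
    x, hxA, hnormx, fun d hd =>
      ⟨by simpa only [he] using hLD d hd, by simpa only [he] using hRD d hd⟩⟩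
end

section
/- Let B be a C*-algebra and z ∈ B. Then z lies in the norm-closed linear span of the set { z (z* z)^n : n ∈ ℕ, n ≥ 1 }. (Consequently, z lies in the norm-closure of z⟨z⟩*z, where ⟨z⟩ is the closed subspace generated by z under triple products.) -/
/-!
With `a = z⋆z` and `R = ‖a‖`, put `uₘ = 1 - (1 - a/R)ᵐ` (continuous functional calculus).
Since `t ↦ 1 - (1 - t/R)ᵐ` is a polynomial without constant term, `z uₘ` lies in the span of the
`z aⁿ⁺¹`. On the other hand `(z - z uₘ)⋆(z - z uₘ) = a (1 - a/R)²ᵐ`, and `t (1 - t/R)²ᵐ ≤ R/(2m+1)`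
on `[0, R] ⊇ σ(a)`, so the C⋆-identity gives `‖z - z uₘ‖² ≤ R/(2m+1) → 0`.
-/

/-- `spow x n = x ^ (n + 1)`, the `(n+1)`-st power in a (possibly non-unital) algebra. -/
def spow {B : Type*} [Mul B] (x : B) : ℕ → B
  | 0 => x
  | n + 1 => spow x n * x

open Filter Topology NonUnitalIsometricContinuousFunctionalCalculus

lemma mul_one_sub_pow_mul_le_one {s : ℝ} (hs0 : 0 ≤ s) (hs1 : s ≤ 1) (k : ℕ) :
    s * (1 - s) ^ k * (k + 1) ≤ 1 := by
  have bernoulli : 1 + k * s ≤ (1 + s) ^ k := one_add_mul_le_pow (by linarith) k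
  have hpow : 0 ≤ (1 - s) ^ k := pow_nonneg (by linarith) k
  calc s * (1 - s) ^ k * (k + 1) ≤ (1 + k * s) * (1 - s) ^ k := by nlinarith
    _ ≤ (1 + s) ^ k * (1 - s) ^ k := by gcongr
    _ = (1 - s ^ 2) ^ k := by rw [← mul_pow]; ring
    _ ≤ 1 := pow_le_one₀ (by nlinarith) (by nlinarith)

lemma mul_one_sub_inv_mul_pow_le {t R : ℝ} (ht0 : 0 ≤ t) (htR : t ≤ R) (k : ℕ) :
    t * (1 - R⁻¹ * t) ^ k ≤ R / (k + 1) := by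
  rcases (ht0.trans htR).eq_or_lt with rfl | hR
  · simp [le_antisymm htR ht0]
  set s := R⁻¹ * t
  have hts : t = R * s := by simp only [s]; field_simp
  have hs0 : 0 ≤ s := by positivity
  have hs1 : s ≤ 1 := by simpa [s, inv_mul_le_one₀ hR] using htR
  rw [le_div_iff₀ (by positivity), hts, mul_assoc, mul_assoc, ← mul_assoc s]
  simpa using mul_le_mul_of_nonneg_left (mul_one_sub_pow_mul_le_one hs0 hs1 k) hR.le

section span

variable {R B : Type*} [CommSemiring R] [NonUnitalSemiring B] [Module R B] [IsScalarTower R B B]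

lemma mul_mem_span_mul_spow {z a w : B}
    (hw : w ∈ Submodule.span R {w | ∃ n : ℕ, w = z * spow a n}) :
    w * a ∈ Submodule.span R {w | ∃ n : ℕ, w = z * spow a n} := by
  induction hw using Submodule.span_induction with
  | mem x hx =>
    obtain ⟨n, rfl⟩ := hx
    exact Submodule.subset_span ⟨n + 1, by rw [spow, mul_assoc]⟩
  | zero => simp
  | add x y _ _ hx hy => simpa [add_mul] using Submodule.add_mem _ hx hy
  | smul c x _ hx => simpa [smul_mul_assoc] using Submodule.smul_mem _ c hx

end span

section CStarAlgebra

variable {B : Type*} [NonUnitalCStarAlgebra B]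

lemma mul_cfcₙ_one_sub_one_sub_mul_pow_mem_span (z : B) {a : B} (ha : IsSelfAdjoint a)
    (c : ℝ) (m : ℕ) :
    z * cfcₙ (fun t : ℝ => 1 - (1 - c * t) ^ m) a ∈
      Submodule.span ℂ {w | ∃ n : ℕ, w = z * spow a n} := by
  set N := Submodule.span ℂ {w | ∃ n : ℕ, w = z * spow a n}
  induction m with
  | zero => simp
  | succ m ih =>
    set u := cfcₙ (fun t : ℝ => 1 - (1 - c * t) ^ m) a
    have hrec : cfcₙ (fun t : ℝ => 1 - (1 - c * t) ^ (m + 1)) a = u + c • a - c • (u * a) := by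
      rw [show (fun t : ℝ => 1 - (1 - c * t) ^ (m + 1)) =
          fun t => (1 - (1 - c * t) ^ m) + c * t - c * ((1 - (1 - c * t) ^ m) * t) by
            funext t; ring,
        cfcₙ_sub _ _ a, cfcₙ_add _ _ a, cfcₙ_const_mul _ _ a, cfcₙ_const_mul _ _ a,
        cfcₙ_mul _ _ a, cfcₙ_id' ℝ a]
    have hza : z * a ∈ N := Submodule.subset_span ⟨0, rfl⟩
    rw [hrec, mul_sub, mul_add, mul_smul_comm, mul_smul_comm, ← mul_assoc]
    exact N.sub_mem (N.add_mem ih (N.smul_of_tower_mem c hza))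
      (N.smul_of_tower_mem c (mul_mem_span_mul_spow ih))

lemma quasispectrum_star_mul_self_subset_Icc (z : B) :
    quasispectrum ℝ (star z * z) ⊆ Set.Icc 0 ‖star z * z‖ := by
  -- `B` carries no order instance; the spectral order provides `0 ≤ star z * z`.
  let _ := CStarAlgebra.spectralOrder B
  have := CStarAlgebra.spectralOrderedRing B
  exact fun t ht => ⟨quasispectrum_nonneg_of_nonneg _ (star_mul_self_nonneg z) t ht,
    (Real.le_norm_self t).trans (norm_quasispectrum_le _ ht (.star_mul_self z))⟩

lemma star_sub_mul_cfcₙ_mul_sub_mul_cfcₙ (z : B) {f : ℝ → ℝ}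
    (hf : ContinuousOn f (quasispectrum ℝ (star z * z)) := by cfc_cont_tac)
    (hf0 : f 0 = 0 := by cfc_zero_tac) :
    star (z - z * cfcₙ f (star z * z)) * (z - z * cfcₙ f (star z * z)) =
      cfcₙ (fun t => t * (1 - f t) ^ 2) (star z * z) := by
  set a := star z * z with ha
  set u := cfcₙ f a
  have hexpand : star (z - z * u) * (z - z * u) = a - a * u - u * a + u * (a * u) := by
    rw [star_sub, star_mul, (cfcₙ_predicate f a).star_eq, ha]
    noncomm_ring
  rw [hexpand, show (fun t => t * (1 - f t) ^ 2) =
      fun t => t - t * f t - f t * t + f t * (t * f t) by funext t; ring,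
    cfcₙ_add _ _ a, cfcₙ_sub _ _ a, cfcₙ_sub _ _ a, cfcₙ_mul _ _ a, cfcₙ_mul _ _ a,
    cfcₙ_mul _ _ a, cfcₙ_mul _ _ a, cfcₙ_id' ℝ a]

lemma norm_sub_mul_cfcₙ_sq_le (z : B) {f : ℝ → ℝ} {C : ℝ}
    (hC : ∀ t ∈ quasispectrum ℝ (star z * z), t * (1 - f t) ^ 2 ≤ C)
    (hf : ContinuousOn f (quasispectrum ℝ (star z * z)) := by cfc_cont_tac)
    (hf0 : f 0 = 0 := by cfc_zero_tac) :
    ‖z - z * cfcₙ f (star z * z)‖ ^ 2 ≤ C := by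
  rw [sq, ← CStarRing.norm_star_mul_self, star_sub_mul_cfcₙ_mul_sub_mul_cfcₙ z]
  refine norm_cfcₙ_le fun t ht => ?_
  have ht0 := (quasispectrum_star_mul_self_subset_Icc z ht).1
  rw [Real.norm_of_nonneg (by positivity)]
  exact hC t ht

lemma tendsto_mul_cfcₙ_one_sub_one_sub_inv_norm_mul_pow (z : B) :
    Tendsto (fun m : ℕ => z * cfcₙ (fun t : ℝ => 1 - (1 - ‖star z * z‖⁻¹ * t) ^ m) (star z * z))
      atTop (𝓝 z) := by
  set R := ‖star z * z‖
  have hbound (m : ℕ) : ‖z - z * cfcₙ (fun t : ℝ => 1 - (1 - R⁻¹ * t) ^ m) (star z * z)‖ ≤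
      √(R / (2 * m + 1)) := by
    refine Real.le_sqrt_of_sq_le (norm_sub_mul_cfcₙ_sq_le z fun t ht => ?_)
    obtain ⟨ht0, htR⟩ := quasispectrum_star_mul_self_subset_Icc z ht
    simpa [← pow_mul, mul_comm m 2] using mul_one_sub_inv_mul_pow_le ht0 htR (2 * m)
  have hsqrt : Tendsto (fun m : ℕ => √(R / (2 * m + 1))) atTop (𝓝 0) := by
    have hlin : Tendsto (fun m : ℕ => 2 * (m : ℝ) + 1) atTop atTop :=
      tendsto_atTop_add_const_right _ 1 (tendsto_natCast_atTop_atTop.const_mul_atTop two_pos)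
    simpa using (tendsto_const_nhds.div_atTop hlin).sqrt
  rw [tendsto_iff_norm_sub_tendsto_zero]
  exact squeeze_zero (fun _ => norm_nonneg _) (fun m => norm_sub_rev z _ ▸ hbound m) hsqrt

end CStarAlgebra

/-- In a C*-algebra, every `z` lies in the norm-closed linear span of
`{ z (z* z)^n : n ≥ 1 }`. -/
theorem mem_closure_span_odd_powers {B : Type*} [NonUnitalCStarAlgebra B] (z : B) :
    z ∈ closure (Submodule.span ℂ {w : B | ∃ n : ℕ, w = z * spow (star z * z) n} :
      Set B) :=
  mem_closure_of_tendsto (tendsto_mul_cfcₙ_one_sub_one_sub_inv_norm_mul_pow z)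
    (.of_forall fun m => mul_cfcₙ_one_sub_one_sub_mul_pow_mem_span z (.star_mul_self z) _ m)
end

section
/- Let B be a unital C*-algebra with unit 1, and let J be a norm-closed subalgebra of B which has no identity element and which possesses a left contractive approximate identity. Then J has a left approximate identity (u_t) (that is, u_t x → x in norm for all x ∈ J) such that lim_t ‖u_t‖ = 1 and lim_t ‖1 − u_t‖ = 1. -/
open Filter Topology

/-!
For a contraction `e ∈ J` and `0 < s < 1` put `u = (1 - s) e (1 - s e)⁻¹`. The Neumann series
shows `u ∈ J` and `‖u‖ ≤ 1`, and `1 - u = (1 - s e)⁻¹ (1 - e)` gives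
`‖u y - y‖ ≤ (1 - s)⁻¹ ‖y - e y‖`. In a C⋆-algebra `s² (1 - e)⋆(1 - e) ≤ (1 - s e)⋆(1 - s e)`,
whence `‖1 - u‖ ≤ s⁻¹`, while `‖1 - u‖ ≥ 1` because `1 ∉ J`. Letting `s → 1` and choosing `e`
from the given left cai late enough for each `s` (a diagonal net) yields the approximate identity.
-/

instance Prod.isDirectedOrder {α β : Type*} [Preorder α] [Preorder β] [IsDirectedOrder α]
    [IsDirectedOrder β] : IsDirectedOrder (α × β) where
  directed a b :=
    let ⟨c₁, hac₁, hbc₁⟩ := directed_of (· ≤ ·) a.1 b.1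
    let ⟨c₂, hac₂, hbc₂⟩ := directed_of (· ≤ ·) a.2 b.2
    ⟨(c₁, c₂), ⟨hac₁, hac₂⟩, ⟨hbc₁, hbc₂⟩⟩

instance Pi.isDirectedOrder {κ : Type*} {α : κ → Type*} [∀ k, Preorder (α k)]
    [∀ k, IsDirectedOrder (α k)] : IsDirectedOrder (∀ k, α k) where
  directed a b := by
    choose c hac hbc using fun k => directed_of (· ≤ ·) (a k) (b k)
    exact ⟨c, hac, hbc⟩

/-- Kelley's diagonal principle for iterated limits. -/
theorem tendsto_atTop_diag_pi {κ ι X : Type*} [Preorder κ] [Preorder ι] [IsDirectedOrder ι]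
    [Nonempty ι] [TopologicalSpace X] {f : κ → ι → X} {x : X}
    (hf : ∀ k, Tendsto (f k) atTop (𝓝 x)) :
    Tendsto (fun i : κ × (κ → ι) => f i.1 (i.2 i.1)) atTop (𝓝 x) := by
  rw [← prod_atTop_atTop_eq, tendsto_def]
  intro U hU
  choose a ha using fun k => eventually_atTop.1 (hf k hU)
  filter_upwards [(tendsto_snd (f := (atTop : Filter κ))).eventually (eventually_ge_atTop a)]
    with i hi
  exact ha i.1 _ (hi i.1)

theorem tendsto_norm_nhds_one_of_tendsto_mul {α B : Type*} [NonUnitalNormedRing B]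
    {l : Filter α} {u : α → B} {y : B} (hu : ∀ t, ‖u t‖ ≤ 1) (hy : y ≠ 0)
    (h : Tendsto (fun t => u t * y) l (𝓝 y)) : Tendsto (fun t => ‖u t‖) l (𝓝 1) := by
  have hlow : Tendsto (fun t => ‖u t * y‖ / ‖y‖) l (𝓝 1) := by
    simpa [hy] using h.norm.div_const ‖y‖
  refine tendsto_of_tendsto_of_tendsto_of_le_of_le hlow tendsto_const_nhds (fun t => ?_) hu
  exact div_le_of_le_mul₀ (norm_nonneg _) (norm_nonneg _) (norm_mul_le _ _)

namespace IsClosedSubalg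

section NonUnital

variable {B : Type*} [NonUnitalNormedRing B] [Module ℂ B] {J : Set B}

theorem real_smul_mem (hJ : IsClosedSubalg J) (r : ℝ) {x : B} (hx : x ∈ J) : r • x ∈ J :=
  hJ.2.2.2.1 r x hx

theorem sub_mem (hJ : IsClosedSubalg J) {x y : B} (hx : x ∈ J) (hy : y ∈ J) : x - y ∈ J := by
  simpa [sub_eq_add_neg] using hJ.2.2.1 x hx _ (hJ.2.2.2.1 (-1) y hy)

theorem mem_of_hasSum {ι : Type*} (hJ : IsClosedSubalg J) {f : ι → B} {a : B} (hf : HasSum f a)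
    (hfJ : ∀ i, f i ∈ J) : a ∈ J :=
  hJ.1.mem_of_tendsto hf <| Eventually.of_forall fun _ =>
    Finset.sum_induction f (· ∈ J) (fun x y hx hy => hJ.2.2.1 x hx y hy) hJ.2.1 fun i _ => hfJ i

end NonUnital

variable {B : Type*} [NormedRing B] [Module ℂ B] {J : Set B}

theorem pow_succ_mem (hJ : IsClosedSubalg J) {x : B} (hx : x ∈ J) (n : ℕ) : x ^ (n + 1) ∈ J := by
  induction n with
  | zero => simpa using hx
  | succ n ih => simpa only [pow_succ] using hJ.2.2.2.2 _ ih _ hx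

theorem mul_one_sub_pow_mem (hJ : IsClosedSubalg J) {u : B} (hu : u ∈ J) (n : ℕ) :
    u * (1 - u) ^ n ∈ J := by
  induction n with
  | zero => simpa using hu
  | succ n ih =>
    rw [pow_succ, ← mul_assoc, mul_sub, mul_one]
    exact hJ.sub_mem ih (hJ.2.2.2.2 _ ih _ hu)

/-- If `‖1 - u‖ < 1`, then `1 = ∑ u (1 - u)ⁿ` is a norm limit of elements of `J`. -/
theorem one_le_norm_one_sub [HasSummableGeomSeries B] (hJ : IsClosedSubalg J) (h1 : (1 : B) ∉ J)
    {u : B} (hu : u ∈ J) : 1 ≤ ‖1 - u‖ := by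
  by_contra! h
  have hsum := (summable_geometric_of_norm_lt_one h).hasSum.mul_left u
  rw [show u * ∑' n, (1 - u) ^ n = 1 by simpa using mul_neg_geom_series _ h] at hsum
  exact h1 (hJ.mem_of_hasSum hsum (hJ.mul_one_sub_pow_mem hu))

end IsClosedSubalg

theorem norm_mul_le_norm_mul_of_star_mul_self_le {A : Type*} [NonUnitalCStarAlgebra A]
    [PartialOrder A] [StarOrderedRing A] {a b : A} (h : star a * a ≤ star b * b) (c : A) :
    ‖a * c‖ ≤ ‖b * c‖ := by
  have hc : star (a * c) * (a * c) ≤ star (b * c) * (b * c) := by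
    simpa only [star_mul, mul_assoc] using star_left_conjugate_le_conjugate h c
  have := CStarAlgebra.norm_le_norm_of_nonneg_of_le (star_mul_self_nonneg _) hc
  rw [CStarRing.norm_star_mul_self, CStarRing.norm_star_mul_self] at this
  exact (mul_self_le_mul_self_iff (norm_nonneg _) (norm_nonneg _)).2 this

section StarOrderedCStarAlgebra

variable {B : Type*} [CStarAlgebra B] [PartialOrder B] [StarOrderedRing B] {e : B}

theorem star_mul_self_le_one (he : ‖e‖ ≤ 1) : star e * e ≤ 1 := by
  rw [← CStarAlgebra.norm_le_one_iff_of_nonneg _ (star_mul_self_nonneg e),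
    CStarRing.norm_star_mul_self]
  exact mul_le_one₀ he (norm_nonneg e) he

theorem star_smul_one_sub_mul_le (he : ‖e‖ ≤ 1) {s : ℝ} (hs₀ : 0 ≤ s) (hs₁ : s ≤ 1) :
    star (s • (1 - e)) * (s • (1 - e)) ≤ star (1 - s • e) * (1 - s • e) := by
  have hdefect : star (1 - s • e) * (1 - s • e) - star (s • (1 - e)) * (s • (1 - e)) =
      (1 - s) ^ 2 • (1 : B) + (s * (1 - s)) • (star (1 - e) * (1 - e)) +
        (s * (1 - s)) • (1 - star e * e) := by
    simp only [star_sub, star_smul, star_one, star_trivial, sub_mul, mul_sub, one_mul, mul_one,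
      smul_mul_assoc, mul_smul_comm, smul_smul, smul_sub]
    module
  have hs : 0 ≤ s * (1 - s) := mul_nonneg hs₀ (sub_nonneg.2 hs₁)
  rw [← sub_nonneg, hdefect]
  exact add_nonneg (add_nonneg (smul_nonneg (sq_nonneg _) zero_le_one)
    (smul_nonneg hs (star_mul_self_nonneg _)))
    (smul_nonneg hs (sub_nonneg.2 (star_mul_self_le_one he)))

end StarOrderedCStarAlgebra

section ResolventTransform

variable {B : Type*} [CStarAlgebra B] {e : B} {s : ℝ}

theorem norm_tsum_geometric_le {x : B} (hx : ‖x‖ < 1) : ‖∑' n : ℕ, x ^ n‖ ≤ (1 - ‖x‖)⁻¹ := by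
  nontriviality B
  simpa using tsum_geometric_le_of_norm_lt_one x hx

/-- `(1 - s) e (1 - s e)⁻¹`, with the inverse written as a Neumann series. -/
noncomputable def resolventTransform (s : ℝ) (e : B) : B :=
  (1 - s) • (e * ∑' n : ℕ, (s • e) ^ n)

theorem norm_smul_le_of_norm_le_one (he : ‖e‖ ≤ 1) (hs₀ : 0 ≤ s) : ‖s • e‖ ≤ s := by
  rw [norm_smul, Real.norm_of_nonneg hs₀]
  exact mul_le_of_le_one_right hs₀ he

theorem norm_smul_lt_one (he : ‖e‖ ≤ 1) (hs₀ : 0 ≤ s) (hs₁ : s < 1) : ‖s • e‖ < 1 :=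
  (norm_smul_le_of_norm_le_one he hs₀).trans_lt hs₁

theorem norm_tsum_smul_pow_le (he : ‖e‖ ≤ 1) (hs₀ : 0 ≤ s) (hs₁ : s < 1) :
    ‖∑' n : ℕ, (s • e) ^ n‖ ≤ (1 - s)⁻¹ :=
  (norm_tsum_geometric_le (norm_smul_lt_one he hs₀ hs₁)).trans <|
    inv_anti₀ (by linarith) (by linarith [norm_smul_le_of_norm_le_one he hs₀])

theorem IsClosedSubalg.resolventTransform_mem {J : Set B} (hJ : IsClosedSubalg J) (heJ : e ∈ J)
    (hse : ‖s • e‖ < 1) : resolventTransform s e ∈ J := by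
  have hsum := ((summable_geometric_of_norm_lt_one hse).hasSum.mul_left e).const_smul (1 - s)
  refine hJ.mem_of_hasSum hsum fun n => ?_
  rw [smul_pow, mul_smul_comm, ← pow_succ', smul_smul]
  exact hJ.real_smul_mem _ (hJ.pow_succ_mem heJ n)

theorem norm_resolventTransform_le (he : ‖e‖ ≤ 1) (hs₀ : 0 ≤ s) (hs₁ : s < 1) :
    ‖resolventTransform s e‖ ≤ 1 := by
  have h1s : 0 < 1 - s := by linarith
  calc ‖resolventTransform s e‖ ≤ (1 - s) * (‖e‖ * ‖∑' n : ℕ, (s • e) ^ n‖) := by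
        rw [resolventTransform, norm_smul, Real.norm_of_nonneg h1s.le]
        gcongr
        exact norm_mul_le _ _
    _ ≤ (1 - s) * (1 * (1 - s)⁻¹) := by gcongr; exact norm_tsum_smul_pow_le he hs₀ hs₁
    _ = 1 := by field_simp

theorem one_sub_resolventTransform (hse : ‖s • e‖ < 1) :
    1 - resolventTransform s e = (1 - e) * ∑' n : ℕ, (s • e) ^ n := by
  calc 1 - resolventTransform s e
      = (1 - s • e) * (∑' n : ℕ, (s • e) ^ n) - (1 - s) • (e * ∑' n : ℕ, (s • e) ^ n) := by
        rw [mul_neg_geom_series _ hse, resolventTransform]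
    _ = (1 - e) * ∑' n : ℕ, (s • e) ^ n := by
        simp only [sub_mul, one_mul, smul_mul_assoc, sub_smul, one_smul]
        abel

theorem commute_tsum_smul_pow (e : B) (s : ℝ) : Commute e (∑' n : ℕ, (s • e) ^ n) :=
  Commute.tsum_right e fun n => ((Commute.refl e).smul_right s).pow_right n

theorem norm_resolventTransform_mul_sub_le (he : ‖e‖ ≤ 1) (hs₀ : 0 ≤ s) (hs₁ : s < 1) (y : B) :
    ‖resolventTransform s e * y - y‖ ≤ (1 - s)⁻¹ * ‖y - e * y‖ := by
  set W := ∑' n : ℕ, (s • e) ^ n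
  have hcomm : (1 - e) * W = W * (1 - e) :=
    ((Commute.one_left W).sub_left (commute_tsum_smul_pow e s)).eq
  have hy : resolventTransform s e * y - y = -(W * (y - e * y)) := by
    rw [← neg_sub, ← one_sub_mul, one_sub_resolventTransform (norm_smul_lt_one he hs₀ hs₁), hcomm,
      mul_assoc, sub_mul, one_mul]
  rw [hy, norm_neg]
  exact (norm_mul_le _ _).trans (by gcongr; exact norm_tsum_smul_pow_le he hs₀ hs₁)

/-- Multiply `s² (1 - e)⋆(1 - e) ≤ (1 - s e)⋆(1 - s e)` on the right by `(1 - s e)⁻¹`. -/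
theorem norm_one_sub_resolventTransform_le (he : ‖e‖ ≤ 1) (hs₀ : 0 < s) (hs₁ : s < 1) :
    ‖1 - resolventTransform s e‖ ≤ s⁻¹ := by
  nontriviality B using norm_of_subsingleton', inv_nonneg, hs₀.le
  let := CStarAlgebra.spectralOrder B
  have := CStarAlgebra.spectralOrderedRing B
  have hse := norm_smul_lt_one he hs₀.le hs₁
  have h := norm_mul_le_norm_mul_of_star_mul_self_le
    (star_smul_one_sub_mul_le he hs₀.le hs₁.le) (∑' n : ℕ, (s • e) ^ n)
  rw [mul_neg_geom_series _ hse, smul_mul_assoc, ← one_sub_resolventTransform hse, norm_smul,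
    Real.norm_of_nonneg hs₀.le, norm_one, ← le_div_iff₀' hs₀, one_div] at h
  exact h

end ResolventTransform
/-- If `J` is a nonunital closed subalgebra of a unital C*-algebra
possessing a left contractive approximate identity, then `J` has a left approximate
identity `(u_t)` with `‖u_t‖ → 1` and `‖1 - u_t‖ → 1`. -/
theorem exists_left_ai_norm_tendsto_one {B : Type*} [CStarAlgebra B]
    (J : Set B) (hJ : IsClosedSubalg J)
    (hnonunital : ¬ ∃ e ∈ J, ∀ x ∈ J, e * x = x ∧ x * e = x)
    (hcai : HasLeftCai J) :
    ∃ (ι : Type) (_ : Preorder ι) (_ : IsDirected ι (· ≤ ·)) (_ : Nonempty ι) (u : ι → B),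
      (∀ t, u t ∈ J) ∧
      (∀ x ∈ J, Tendsto (fun t => u t * x) atTop (𝓝 x)) ∧
      Tendsto (fun t => ‖u t‖) atTop (𝓝 1) ∧
      Tendsto (fun t => ‖(1 : B) - u t‖) atTop (𝓝 1) := by
  obtain ⟨ι, _, _, _, e, heJ, he, hconv⟩ := hcai
  have h1 : (1 : B) ∉ J := fun h1 => hnonunital ⟨1, h1, fun x _ => ⟨one_mul x, mul_one x⟩⟩
  obtain ⟨y₀, hy₀J, hy₀⟩ : ∃ y ∈ J, y ≠ 0 := by
    by_contra! h
    exact hnonunital ⟨0, hJ.2.1, fun x hx => by simp [h x hx]⟩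
  obtain ⟨s, -, hs01, hs⟩ := exists_seq_strictMono_tendsto' (zero_lt_one' ℝ)
  have hs₀ (n : ℕ) : 0 < s n := (hs01 n).1
  have hs₁ (n : ℕ) : s n < 1 := (hs01 n).2
  let u (i : ℕ × (ℕ → ι)) : B := resolventTransform (s i.1) (e (i.2 i.1))
  have hu_conv : ∀ x ∈ J, Tendsto (fun i => u i * x) atTop (𝓝 x) := by
    intro x hx
    rw [tendsto_iff_norm_sub_tendsto_zero]
    refine squeeze_zero (fun _ => norm_nonneg _)
      (fun i => norm_resolventTransform_mul_sub_le (he _) (hs₀ i.1).le (hs₁ i.1) x) ?_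
    refine tendsto_atTop_diag_pi (f := fun n t => (1 - s n)⁻¹ * ‖x - e t * x‖) fun n => ?_
    simpa using (((hconv x hx).const_sub x).norm.const_mul (1 - s n)⁻¹)
  have hs_inv : Tendsto (fun i : ℕ × (ℕ → ι) => (s i.1)⁻¹) atTop (𝓝 1) := by
    have hfst : Tendsto (Prod.fst : ℕ × (ℕ → ι) → ℕ) atTop atTop :=
      tendsto_fst.mono_left prod_atTop_atTop_eq.ge
    simpa only [inv_one, Function.comp_def] using (hs.inv₀ one_ne_zero).comp hfst
  have hu_mem (i) : u i ∈ J :=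
    hJ.resolventTransform_mem (heJ _) (norm_smul_lt_one (he _) (hs₀ i.1).le (hs₁ i.1))
  refine ⟨ℕ × (ℕ → ι), inferInstance, inferInstance, inferInstance, u, hu_mem, hu_conv,
    tendsto_norm_nhds_one_of_tendsto_mul (fun i => norm_resolventTransform_le (he _) (hs₀ i.1).le
      (hs₁ i.1)) hy₀ (hu_conv y₀ hy₀J), ?_⟩
  exact tendsto_of_tendsto_of_tendsto_of_le_of_le tendsto_const_nhds hs_inv
    (fun i => hJ.one_le_norm_one_sub h1 (hu_mem i))
    (fun i => norm_one_sub_resolventTransform_le (he _) (hs₀ i.1) (hs₁ i.1))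
end

section
/- Let H be a complex Hilbert space and let a be a bounded linear operator on H with ‖a‖ ≤ 1. Then the Cesàro averages (1/n) Σ_{k=1}^{n} a^k converge in the strong operator topology (i.e. pointwise in norm on H) to the orthogonal projection q of H onto the closed subspace { ξ ∈ H : a ξ = ξ }, and this projection satisfies q a = a q = q. -/
open Filter Topology

/-!
By the von Neumann mean ergodic theorem, the averages `(1/n) ∑_{k<n} a^k ξ` converge to `q ξ`.
The averages in the statement are the same averages taken at `a ξ`; since the orbit of `ξ` is
bounded, the averages at `a ξ` and at `ξ` differ by `(a^n ξ - ξ)/n → 0`. So they converge to `q ξ`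
as well as to `q (a ξ)`, which gives both the convergence and `q a = q`.
-/

namespace ContinuousLinearMap

variable {𝕜 E : Type*} [RCLike 𝕜] [NormedAddCommGroup E]

theorem smul_sum_Icc_pow_apply [NormedSpace 𝕜 E] (f : E →L[𝕜] E) (n : ℕ) (x : E) :
    ((n : 𝕜)⁻¹ • ∑ k ∈ Finset.Icc 1 n, f ^ k) x = birkhoffAverage 𝕜 f _root_.id n (f x) := by
  rw [← Finset.Ico_add_one_right_eq_Icc, ← zero_add 1, ← Finset.sum_Ico_add',
    ← Finset.range_eq_Ico]
  simp [birkhoffAverage, birkhoffSum, pow_succ]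

variable [InnerProductSpace 𝕜 E] [CompleteSpace E] {f : E →L[𝕜] E}

theorem tendsto_birkhoffAverage_starProjection (hf : ‖f‖ ≤ 1) (x : E) :
    Tendsto (birkhoffAverage 𝕜 f _root_.id · x) atTop
      (𝓝 ((f.eqLocus (1 : E →L[𝕜] E)).starProjection x)) :=
  f.tendsto_birkhoffAverage_orthogonalProjection hf x

theorem tendsto_birkhoffAverage_apply_self_starProjection (hf : ‖f‖ ≤ 1) (x : E) :
    Tendsto (birkhoffAverage 𝕜 f _root_.id · (f x)) atTop
      (𝓝 ((f.eqLocus (1 : E →L[𝕜] E)).starProjection x)) := by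
  have hbdd : Bornology.IsBounded (Set.range (_root_.id <| f^[·] x)) := by
    refine isBounded_iff_forall_norm_le.2 ⟨‖x‖, Set.forall_mem_range.2 fun n => ?_⟩
    have h0 : f^[n] 0 = 0 := iterate_map_zero f n
    have hL : LipschitzWith 1 f := f.lipschitz.weaken hf
    simpa [h0] using (hL.iterate n).dist_le_mul x 0
  simpa using (tendsto_birkhoffAverage_apply_sub_birkhoffAverage 𝕜 hbdd).add
    (tendsto_birkhoffAverage_starProjection hf x)

theorem tendsto_smul_sum_Icc_pow_apply (hf : ‖f‖ ≤ 1) (x : E) :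
    Tendsto (fun n : ℕ => ((n : 𝕜)⁻¹ • ∑ k ∈ Finset.Icc 1 n, f ^ k) x) atTop
      (𝓝 ((f.eqLocus (1 : E →L[𝕜] E)).starProjection x)) := by
  simpa only [smul_sum_Icc_pow_apply] using tendsto_birkhoffAverage_apply_self_starProjection hf x

theorem starProjection_eqLocus_comp_self (hf : ‖f‖ ≤ 1) :
    (f.eqLocus (1 : E →L[𝕜] E)).starProjection ∘L f =
      (f.eqLocus (1 : E →L[𝕜] E)).starProjection :=
  ext fun x => tendsto_nhds_unique (tendsto_birkhoffAverage_starProjection hf (f x))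
    (tendsto_birkhoffAverage_apply_self_starProjection hf x)

theorem comp_starProjection_eqLocus :
    f ∘L (f.eqLocus (1 : E →L[𝕜] E)).starProjection =
      (f.eqLocus (1 : E →L[𝕜] E)).starProjection :=
  ext fun x => (f.eqLocus (1 : E →L[𝕜] E)).starProjection_apply_mem x

end ContinuousLinearMap

/-- For a contraction `a` on a complex Hilbert space `H`, the Cesàro
averages `(1/n) ∑_{k=1}^n a^k` converge in the strong operator topology to the orthogonal
projection `q` onto `{ξ : a ξ = ξ}` (the self-adjoint idempotent with that range), and
`q a = a q = q`. -/
theorem cesaro_tendsto_orthogonalProjection {H : Type*} [NormedAddCommGroup H]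
    [InnerProductSpace ℂ H] [CompleteSpace H]
    (a : H →L[ℂ] H) (ha : ‖a‖ ≤ 1) :
    ∃ q : H →L[ℂ] H, IsSelfAdjoint q ∧ q ∘L q = q ∧
      Set.range q = {ξ : H | a ξ = ξ} ∧
      (∀ ξ : H, Tendsto (fun n : ℕ => ((n : ℂ)⁻¹ • ∑ k ∈ Finset.Icc 1 n, a ^ k) ξ)
        atTop (𝓝 (q ξ))) ∧
      q ∘L a = q ∧ a ∘L q = q := by
  set K := a.eqLocus (1 : H →L[ℂ] H)
  refine ⟨K.starProjection, isSelfAdjoint_starProjection K, K.isIdempotentElem_starProjection.eq,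
    congrArg SetLike.coe K.range_starProjection, a.tendsto_smul_sum_Icc_pow_apply ha,
    a.starProjection_eqLocus_comp_self ha, a.comp_starProjection_eqLocus⟩
end
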